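/- arXiv:2206.13352 — 5 statements merged into one kernel-verified Lean document; each statement's English description precedes it below -/
import Mathlib

section
/- For Algorithm-3 iterates with a saddle point (φ*, q*, μ*) of L, p* = Bφ*, b* = q*, and step sizes ρ_r, ρ_s > 0 satisfying 2s − ρ_r − ρ_s s² − |ρ_r r − ρ_s s| > 0 and 2r − ρ_r r² − ρ_s − |ρ_r r − ρ_s s| > 0, the real sequence n ↦ ρ_s(‖pⁿ − p*‖² + ‖bⁿ − b*‖²) + ρ_r(‖νⁿ − μ*‖² + ‖ηⁿ − μ*‖²) is nonincreasing; in particular the sequences (‖pⁿ − p*‖), (‖bⁿ − b*‖), (‖νⁿ − μ*‖), (‖ηⁿ − μ*‖), (‖Bφⁿ − Bφ*‖), (‖qⁿ − q*‖) and (‖μⁿ − μ*‖) are bounded. -/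
open RealInnerProductSpace Filter Topology

set_option maxHeartbeats 1000000 in
lemma alg3_core {H : Type*} [NormedAddCommGroup H] [InnerProductSpace ℝ H]
    (x y m A A2 Cc C2 : H) (r s ρr ρs : ℝ) (hρr : 0 < ρr) (hρs : 0 < ρs)
    (hA : ⟪m - Cc, x⟫ + r*⟪A, x⟫ ≤ 0)
    (hB : 0 ≤ ⟪m - C2, y⟫ + r*⟪A2, y⟫)
    (hC : 0 ≤ ⟪m, x - A - y - A2⟫ - s*⟪m, Cc⟫ - s*⟪m, C2⟫) :
    ρs*(‖(x - A) - ρr•(Cc - r•A)‖^2 + ‖(y + A2) - ρr•(-C2 + r•A2)‖^2)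
    + ρr*(‖(m - Cc) + ρs•(A + s•Cc)‖^2 + ‖(m - C2) + ρs•(A2 + s•C2)‖^2)
    + ρr*ρs*((2*r - ρr*r^2 - ρs - |ρr*r - ρs*s|)*(‖A‖^2 + ‖A2‖^2)
        + (2*s - ρr - ρs*s^2 - |ρr*r - ρs*s|)*(‖Cc‖^2 + ‖C2‖^2))
    ≤ ρs*(‖x - A‖^2 + ‖y + A2‖^2) + ρr*(‖m - Cc‖^2 + ‖m - C2‖^2) := by
  have hrs : (0:ℝ) < ρr * ρs := mul_pos hρr hρs
  have key : ∀ (u v : H), (ρs*s - ρr*r) * (2*⟪u,v⟫) ≤ |ρr*r - ρs*s| * (‖u‖^2 + ‖v‖^2) := by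
    intro u v
    have e1 : 2*⟪u,v⟫ ≤ ‖u‖^2 + ‖v‖^2 := by
      nlinarith [norm_sub_sq_real u v, sq_nonneg ‖u - v‖]
    have e2 : -(‖u‖^2 + ‖v‖^2) ≤ 2*⟪u,v⟫ := by
      nlinarith [norm_add_sq_real u v, sq_nonneg ‖u + v‖]
    rw [abs_sub_comm]
    rcases abs_cases (ρs*s - ρr*r) with ⟨h,h'⟩|⟨h,h'⟩ <;> rw [h] <;> nlinarith
  have h1 : ‖(x - A) - ρr•(Cc - r•A)‖^2
      = ‖x - A‖^2 - 2*ρr*(⟪x,Cc⟫ - r*⟪x,A⟫ - ⟪A,Cc⟫ + r*‖A‖^2)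
        + ρr^2*(‖Cc‖^2 - 2*r*⟪A,Cc⟫ + r^2*‖A‖^2) := by
    simp only [← real_inner_self_eq_norm_sq]
    simp only [inner_sub_left, inner_sub_right, inner_add_left, inner_add_right,
      real_inner_smul_left, real_inner_smul_right,
      real_inner_comm Cc x, real_inner_comm A x, real_inner_comm Cc A]
    ring
  have h2 : ‖(y + A2) - ρr•(-C2 + r•A2)‖^2
      = ‖y + A2‖^2 - 2*ρr*(-⟪y,C2⟫ + r*⟪y,A2⟫ - ⟪A2,C2⟫ + r*‖A2‖^2)
        + ρr^2*(‖C2‖^2 - 2*r*⟪A2,C2⟫ + r^2*‖A2‖^2) := by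
    simp only [← real_inner_self_eq_norm_sq]
    simp only [inner_sub_left, inner_sub_right, inner_add_left, inner_add_right,
      inner_neg_left, inner_neg_right,
      real_inner_smul_left, real_inner_smul_right,
      real_inner_comm C2 y, real_inner_comm A2 y, real_inner_comm C2 A2]
    ring
  have h3 : ‖(m - Cc) + ρs•(A + s•Cc)‖^2
      = ‖m - Cc‖^2 + 2*ρs*(⟪m,A⟫ + s*⟪m,Cc⟫ - ⟪A,Cc⟫ - s*‖Cc‖^2)
        + ρs^2*(‖A‖^2 + 2*s*⟪A,Cc⟫ + s^2*‖Cc‖^2) := by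
    simp only [← real_inner_self_eq_norm_sq]
    simp only [inner_sub_left, inner_sub_right, inner_add_left, inner_add_right,
      real_inner_smul_left, real_inner_smul_right,
      real_inner_comm A m, real_inner_comm Cc m, real_inner_comm Cc A]
    ring
  have h4 : ‖(m - C2) + ρs•(A2 + s•C2)‖^2
      = ‖m - C2‖^2 + 2*ρs*(⟪m,A2⟫ + s*⟪m,C2⟫ - ⟪A2,C2⟫ - s*‖C2‖^2)
        + ρs^2*(‖A2‖^2 + 2*s*⟪A2,C2⟫ + s^2*‖C2‖^2) := by
    simp only [← real_inner_self_eq_norm_sq]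
    simp only [inner_sub_left, inner_sub_right, inner_add_left, inner_add_right,
      real_inner_smul_left, real_inner_smul_right,
      real_inner_comm A2 m, real_inner_comm C2 m, real_inner_comm C2 A2]
    ring
  have hA' : ⟪m,x⟫ - ⟪x,Cc⟫ + r*⟪x,A⟫ ≤ 0 := by
    simpa only [inner_sub_left, real_inner_comm Cc x, real_inner_comm A x] using hA
  have hB' : 0 ≤ ⟪m,y⟫ - ⟪y,C2⟫ + r*⟪y,A2⟫ := by
    simpa only [inner_sub_left, real_inner_comm C2 y, real_inner_comm A2 y] using hB
  have hC' : 0 ≤ ⟪m,x⟫ - ⟪m,A⟫ - ⟪m,y⟫ - ⟪m,A2⟫ - s*⟪m,Cc⟫ - s*⟪m,C2⟫ := by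
    simpa only [inner_sub_right] using hC
  have HA := mul_le_mul_of_nonneg_left hA' hrs.le
  have HB := mul_le_mul_of_nonneg_left hB' hrs.le
  have HC := mul_le_mul_of_nonneg_left hC' hrs.le
  have HCS1 := mul_le_mul_of_nonneg_left (key A Cc) hrs.le
  have HCS2 := mul_le_mul_of_nonneg_left (key A2 C2) hrs.le
  rw [h1, h2, h3, h4]
  set t := |ρr*r - ρs*s|
  linarith [HA, HB, HC, HCS1, HCS2]

set_option maxHeartbeats 2000000 in
/-- For Algorithm-3 iterates, the sequence
n ↦ ρ_s(‖pⁿ − p*‖² + ‖bⁿ − b*‖²) + ρ_r(‖νⁿ − μ*‖² + ‖ηⁿ − μ*‖²) is nonincreasing,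
and the iterate sequences are bounded. -/
theorem algorithm3_monotone_and_bounded
    {V H : Type*} [NormedAddCommGroup V] [InnerProductSpace ℝ V] [CompleteSpace V]
    [NormedAddCommGroup H] [InnerProductSpace ℝ H] [CompleteSpace H]
    (B : V →L[ℝ] H) (F : H → ℝ) (G : V → ℝ) (I : H → ℝ)
    (hFconv : ConvexOn ℝ Set.univ F) (hFlsc : LowerSemicontinuous F)
    (hGconv : ConvexOn ℝ Set.univ G) (hGlsc : LowerSemicontinuous G)
    (hIconv : ConvexOn ℝ Set.univ I) (hIlsc : LowerSemicontinuous I)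
    (L : V → H → H → ℝ)
    (hL : ∀ (φ' : V) (q' μ' : H), L φ' q' μ' = F q' + G φ' - I μ' + ⟪μ', B φ' - q'⟫)
    (r s ρr ρs : ℝ) (hr : 0 < r) (hs : 0 < s) (hρr : 0 < ρr) (hρs : 0 < ρs)
    (hstep1 : 0 < 2*s - ρr - ρs*s^2 - |ρr*r - ρs*s|)
    (hstep2 : 0 < 2*r - ρr*r^2 - ρs - |ρr*r - ρs*s|)
    (φs : V) (qs μs : H) (ps bs : H) (hps : ps = B φs) (hbs : bs = qs)
    (hsaddle : ∀ (φ' : V) (q' μ' : H), L φs qs μ' ≤ L φs qs μs ∧ L φs qs μs ≤ L φ' q' μs)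
    (φ : ℕ → V) (q μ p b ν η : ℕ → H)
    (hi : ∀ n, 1 ≤ n → ∀ φ' : V,
      G φ' - G (φ n) + ⟪ν (n-1), B φ' - B (φ n)⟫
        + r * ⟪B (φ n) - p (n-1), B φ' - B (φ n)⟫ ≥ 0)
    (hii : ∀ n, 1 ≤ n → ∀ q' : H,
      F q' - F (q n) + ⟪η (n-1), q n - q'⟫ + r * ⟪b (n-1) - q n, q n - q'⟫ ≥ 0)
    (hiii : ∀ n, 1 ≤ n → ∀ μ' : H,
      I μ' - I (μ n) + ⟪μ n - μ', p (n-1) - b (n-1)⟫ - s * ⟪μ n - μ', μ n - ν (n-1)⟫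
        - s * ⟪μ n - μ', μ n - η (n-1)⟫ ≥ 0)
    (hiv : ∀ n, 1 ≤ n →
      p n = p (n-1) - ρr • (μ n - ν (n-1) + r • (p (n-1) - B (φ n))) ∧
      b n = b (n-1) - ρr • (η (n-1) - μ n + r • (b (n-1) - q n)))
    (hv : ∀ n, 1 ≤ n →
      ν n = ν (n-1) + ρs • (B (φ n) - p (n-1) - s • (ν (n-1) - μ n)) ∧
      η n = η (n-1) + ρs • (b (n-1) - q n - s • (η (n-1) - μ n)))
    :
    (∀ n : ℕ,
      ρs*(‖p (n+1) - ps‖^2 + ‖b (n+1) - bs‖^2) + ρr*(‖ν (n+1) - μs‖^2 + ‖η (n+1) - μs‖^2) ≤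
      ρs*(‖p n - ps‖^2 + ‖b n - bs‖^2) + ρr*(‖ν n - μs‖^2 + ‖η n - μs‖^2)) ∧
    (∃ C : ℝ, (∀ n : ℕ, ‖p n - ps‖ ≤ C ∧ ‖b n - bs‖ ≤ C ∧ ‖ν n - μs‖ ≤ C ∧ ‖η n - μs‖ ≤ C) ∧
      (∀ n, 1 ≤ n → ‖B (φ n) - B φs‖ ≤ C ∧ ‖q n - qs‖ ≤ C ∧ ‖μ n - μs‖ ≤ C)) := by
  have hrs : (0:ℝ) < ρr * ρs := mul_pos hρr hρs
  -- the one-step estimate with dissipation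
  have step : ∀ n : ℕ, 1 ≤ n →
      ρs*(‖p n - ps‖^2 + ‖b n - bs‖^2) + ρr*(‖ν n - μs‖^2 + ‖η n - μs‖^2)
      + ρr*ρs*((2*r - ρr*r^2 - ρs - |ρr*r - ρs*s|)*(‖B (φ n) - p (n-1)‖^2 + ‖b (n-1) - q n‖^2)
          + (2*s - ρr - ρs*s^2 - |ρr*r - ρs*s|)*(‖μ n - ν (n-1)‖^2 + ‖μ n - η (n-1)‖^2))
      ≤ ρs*(‖p (n-1) - ps‖^2 + ‖b (n-1) - bs‖^2)
        + ρr*(‖ν (n-1) - μs‖^2 + ‖η (n-1) - μs‖^2) := by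
    intro n hn
    have hsad1 := (hsaddle (φ n) qs μs).2
    have hsad2 := (hsaddle φs (q n) μs).2
    have hsad3 := (hsaddle φs qs (μ n)).1
    simp only [hL] at hsad1 hsad2 hsad3
    have hi1 := hi n hn φs
    have hii1 := hii n hn qs
    have hiii1 := hiii n hn μs
    have hA : ⟪(μ n - μs) - (μ n - ν (n-1)), B (φ n) - B φs⟫
        + r*⟪B (φ n) - p (n-1), B (φ n) - B φs⟫ ≤ 0 := by
      simp only [inner_sub_left, inner_sub_right] at hsad1 hi1 ⊢
      linarith
    have hB : 0 ≤ ⟪(μ n - μs) - (μ n - η (n-1)), q n - qs⟫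
        + r*⟪b (n-1) - q n, q n - qs⟫ := by
      simp only [inner_sub_left, inner_sub_right] at hsad2 hii1 ⊢
      linarith
    have hC : 0 ≤ ⟪μ n - μs,
          (B (φ n) - B φs) - (B (φ n) - p (n-1)) - (q n - qs) - (b (n-1) - q n)⟫
        - s*⟪μ n - μs, μ n - ν (n-1)⟫ - s*⟪μ n - μs, μ n - η (n-1)⟫ := by
      simp only [inner_sub_left, inner_sub_right] at hsad3 hiii1 ⊢
      linarith
    have hcore := alg3_core (B (φ n) - B φs) (q n - qs) (μ n - μs)
      (B (φ n) - p (n-1)) (b (n-1) - q n) (μ n - ν (n-1)) (μ n - η (n-1))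
      r s ρr ρs hρr hρs hA hB hC
    have e1 : p n - ps = ((B (φ n) - B φs) - (B (φ n) - p (n-1)))
        - ρr•((μ n - ν (n-1)) - r•(B (φ n) - p (n-1))) := by
      rw [(hiv n hn).1, hps]; module
    have e2 : b n - bs = ((q n - qs) + (b (n-1) - q n))
        - ρr•(-(μ n - η (n-1)) + r•(b (n-1) - q n)) := by
      rw [(hiv n hn).2, hbs]; module
    have e3 : ν n - μs = ((μ n - μs) - (μ n - ν (n-1)))
        + ρs•((B (φ n) - p (n-1)) + s•(μ n - ν (n-1))) := by
      rw [(hv n hn).1]; module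
    have e4 : η n - μs = ((μ n - μs) - (μ n - η (n-1)))
        + ρs•((b (n-1) - q n) + s•(μ n - η (n-1))) := by
      rw [(hv n hn).2]; module
    have e5 : p (n-1) - ps = (B (φ n) - B φs) - (B (φ n) - p (n-1)) := by
      rw [hps]; abel
    have e6 : b (n-1) - bs = (q n - qs) + (b (n-1) - q n) := by
      rw [hbs]; abel
    have e7 : ν (n-1) - μs = (μ n - μs) - (μ n - ν (n-1)) := by abel
    have e8 : η (n-1) - μs = (μ n - μs) - (μ n - η (n-1)) := by abel
    rw [e1, e2, e3, e4, e5, e6, e7, e8]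
    exact hcore
  have part1 : ∀ n : ℕ,
      ρs*(‖p (n+1) - ps‖^2 + ‖b (n+1) - bs‖^2) + ρr*(‖ν (n+1) - μs‖^2 + ‖η (n+1) - μs‖^2) ≤
      ρs*(‖p n - ps‖^2 + ‖b n - bs‖^2) + ρr*(‖ν n - μs‖^2 + ‖η n - μs‖^2) := by
    intro n
    have h := step (n+1) (Nat.le_add_left 1 n)
    simp only [Nat.add_sub_cancel] at h
    have h1 : 0 ≤ ρr*ρs*((2*r - ρr*r^2 - ρs - |ρr*r - ρs*s|)*(‖B (φ (n+1)) - p n‖^2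
          + ‖b n - q (n+1)‖^2)
        + (2*s - ρr - ρs*s^2 - |ρr*r - ρs*s|)*(‖μ (n+1) - ν n‖^2 + ‖μ (n+1) - η n‖^2)) := by
      apply mul_nonneg hrs.le
      apply add_nonneg
      · exact mul_nonneg hstep2.le (by positivity)
      · exact mul_nonneg hstep1.le (by positivity)
    linarith
  refine ⟨part1, ?_⟩
  -- boundedness
  obtain ⟨K, hKdef⟩ : ∃ K : ℝ, K = ρs*(‖p 0 - ps‖^2 + ‖b 0 - bs‖^2)
      + ρr*(‖ν 0 - μs‖^2 + ‖η 0 - μs‖^2) := ⟨_, rfl⟩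
  have hKn : ∀ n : ℕ,
      ρs*(‖p n - ps‖^2 + ‖b n - bs‖^2) + ρr*(‖ν n - μs‖^2 + ‖η n - μs‖^2) ≤ K := by
    intro n
    induction n with
    | zero => exact le_of_eq hKdef.symm
    | succ k ih => exact le_trans (part1 k) ih
  have hK0 : 0 ≤ K := by rw [hKdef]; positivity
  have bnd : ∀ (t : ℝ), 0 < t → ∀ v : H, t*‖v‖^2 ≤ K → ‖v‖ ≤ Real.sqrt (K/t) := by
    intro t ht v h
    rw [Real.le_sqrt (norm_nonneg v) (div_nonneg hK0 ht.le), le_div_iff₀ ht]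
    linarith
  obtain ⟨d1, hd1⟩ : ∃ d1 : ℝ, d1 = 2*r - ρr*r^2 - ρs - |ρr*r - ρs*s| := ⟨_, rfl⟩
  obtain ⟨d2, hd2⟩ : ∃ d2 : ℝ, d2 = 2*s - ρr - ρs*s^2 - |ρr*r - ρs*s| := ⟨_, rfl⟩
  have hd1p : 0 < d1 := by rw [hd1]; exact hstep2
  have hd2p : 0 < d2 := by rw [hd2]; exact hstep1
  obtain ⟨C, hCdef⟩ : ∃ C : ℝ, C = Real.sqrt (K/ρs) + Real.sqrt (K/ρr)
      + Real.sqrt (K/(ρr*ρs*d1)) + Real.sqrt (K/(ρr*ρs*d2)) := ⟨_, rfl⟩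
  have sq1 : 0 ≤ Real.sqrt (K/ρs) := Real.sqrt_nonneg _
  have sq2 : 0 ≤ Real.sqrt (K/ρr) := Real.sqrt_nonneg _
  have sq3 : 0 ≤ Real.sqrt (K/(ρr*ρs*d1)) := Real.sqrt_nonneg _
  have sq4 : 0 ≤ Real.sqrt (K/(ρr*ρs*d2)) := Real.sqrt_nonneg _
  have hd1pos : 0 < ρr*ρs*d1 := mul_pos hrs hd1p
  have hd2pos : 0 < ρr*ρs*d2 := mul_pos hrs hd2p
  -- bounds for the four main sequences
  have hquad : ∀ n : ℕ, ‖p n - ps‖ ≤ Real.sqrt (K/ρs) ∧ ‖b n - bs‖ ≤ Real.sqrt (K/ρs)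
      ∧ ‖ν n - μs‖ ≤ Real.sqrt (K/ρr) ∧ ‖η n - μs‖ ≤ Real.sqrt (K/ρr) := by
    intro n
    have h := hKn n
    have n1 : (0:ℝ) ≤ ρs*‖p n - ps‖^2 := by positivity
    have n2 : (0:ℝ) ≤ ρs*‖b n - bs‖^2 := by positivity
    have n3 : (0:ℝ) ≤ ρr*‖ν n - μs‖^2 := by positivity
    have n4 : (0:ℝ) ≤ ρr*‖η n - μs‖^2 := by positivity
    exact ⟨bnd ρs hρs _ (by linarith), bnd ρs hρs _ (by linarith),
      bnd ρr hρr _ (by linarith), bnd ρr hρr _ (by linarith)⟩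
  -- dissipation bounds
  have hdiss : ∀ n : ℕ, 1 ≤ n →
      ‖B (φ n) - p (n-1)‖ ≤ Real.sqrt (K/(ρr*ρs*d1))
      ∧ ‖b (n-1) - q n‖ ≤ Real.sqrt (K/(ρr*ρs*d1))
      ∧ ‖μ n - ν (n-1)‖ ≤ Real.sqrt (K/(ρr*ρs*d2))
      ∧ ‖μ n - η (n-1)‖ ≤ Real.sqrt (K/(ρr*ρs*d2)) := by
    intro n hn
    have h := step n hn
    rw [← hd1, ← hd2] at h
    have hK' := hKn (n-1)
    have n1 : (0:ℝ) ≤ ρs*(‖p n - ps‖^2 + ‖b n - bs‖^2)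
        + ρr*(‖ν n - μs‖^2 + ‖η n - μs‖^2) := by positivity
    have m1 : (0:ℝ) ≤ ρr*ρs*(d1*‖B (φ n) - p (n-1)‖^2) :=
      mul_nonneg hrs.le (mul_nonneg hd1p.le (by positivity))
    have m2 : (0:ℝ) ≤ ρr*ρs*(d1*‖b (n-1) - q n‖^2) :=
      mul_nonneg hrs.le (mul_nonneg hd1p.le (by positivity))
    have m3 : (0:ℝ) ≤ ρr*ρs*(d2*‖μ n - ν (n-1)‖^2) :=
      mul_nonneg hrs.le (mul_nonneg hd2p.le (by positivity))
    have m4 : (0:ℝ) ≤ ρr*ρs*(d2*‖μ n - η (n-1)‖^2) :=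
      mul_nonneg hrs.le (mul_nonneg hd2p.le (by positivity))
    refine ⟨bnd _ hd1pos _ (by nlinarith), bnd _ hd1pos _ (by nlinarith),
      bnd _ hd2pos _ (by nlinarith), bnd _ hd2pos _ (by nlinarith)⟩
  refine ⟨C, fun n => ?_, fun n hn => ?_⟩
  · obtain ⟨b1, b2, b3, b4⟩ := hquad n
    rw [hCdef]
    exact ⟨by linarith, by linarith, by linarith, by linarith⟩
  · obtain ⟨e1', e2', e3', e4'⟩ := hdiss n hn
    obtain ⟨b1, b2, b3, b4⟩ := hquad (n-1)
    rw [hCdef]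
    refine ⟨?_, ?_, ?_⟩
    · have e : B (φ n) - B φs = (B (φ n) - p (n-1)) + (p (n-1) - ps) := by
        rw [hps]; abel
      calc ‖B (φ n) - B φs‖ = ‖(B (φ n) - p (n-1)) + (p (n-1) - ps)‖ := by rw [e]
        _ ≤ ‖B (φ n) - p (n-1)‖ + ‖p (n-1) - ps‖ := norm_add_le _ _
        _ ≤ _ := by linarith
    · have e : q n - qs = (b (n-1) - bs) - (b (n-1) - q n) := by
        rw [hbs]; abel
      calc ‖q n - qs‖ = ‖(b (n-1) - bs) - (b (n-1) - q n)‖ := by rw [e]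
        _ ≤ ‖b (n-1) - bs‖ + ‖b (n-1) - q n‖ := norm_sub_le _ _
        _ ≤ _ := by linarith
    · have e : μ n - μs = (μ n - ν (n-1)) + (ν (n-1) - μs) := by abel
      calc ‖μ n - μs‖ = ‖(μ n - ν (n-1)) + (ν (n-1) - μs)‖ := by rw [e]
        _ ≤ ‖μ n - ν (n-1)‖ + ‖ν (n-1) - μs‖ := norm_add_le _ _
        _ ≤ _ := by linarith
end

section
/- For Algorithm-3 iterates with a saddle point (φ*, q*, μ*) of L, p* = Bφ*, b* = q*, and step sizes ρ_r, ρ_s > 0 satisfying 2s − ρ_r − ρ_s s² − |ρ_r r − ρ_s s| > 0 and 2r − ρ_r r² − ρ_s − |ρ_r r − ρ_s s| > 0, one has ‖Bφⁿ − pⁿ‖ → 0, ‖bⁿ − qⁿ‖ → 0, ‖μⁿ − νⁿ‖ → 0, ‖μⁿ − ηⁿ‖ → 0, ‖νⁿ − νⁿ⁻¹‖ → 0, ‖ηⁿ − ηⁿ⁻¹‖ → 0, ‖pⁿ − pⁿ⁻¹‖ → 0, ‖bⁿ − bⁿ⁻¹‖ → 0, and I(μⁿ) − I(μ*) − ⟨μⁿ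 − μ*, p* − b*⟩ → 0 as n → ∞. -/
open RealInnerProductSpace Filter Topology

lemma alg3_quad {H : Type*} [NormedAddCommGroup H] [InnerProductSpace ℝ H]
    (t ρr ρs : ℝ) (hρr : 0 ≤ ρr) (hρs : 0 ≤ ρs) (a d : H) :
    ρr*ρs*(2*t*⟪a,d⟫ - |t| * (‖a‖^2+‖d‖^2)) ≤ 0 := by
  have h1 : t*⟪a,d⟫ ≤ |t| * (‖a‖*‖d‖) := by
    calc t*⟪a,d⟫ ≤ |t*⟪a,d⟫| := le_abs_self _
    _ = |t| * |⟪a,d⟫| := abs_mul _ _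
    _ ≤ |t| * (‖a‖*‖d‖) := by
        exact mul_le_mul_of_nonneg_left (abs_real_inner_le_norm a d) (abs_nonneg t)
  have h2 : (2*t*⟪a,d⟫ - |t| * (‖a‖^2+‖d‖^2)) ≤ 0 := by
    nlinarith [mul_nonneg (abs_nonneg t) (sq_nonneg (‖a‖ - ‖d‖))]
  exact mul_nonpos_of_nonneg_of_nonpos (mul_nonneg hρr hρs) h2

lemma alg3_step {H : Type*} [NormedAddCommGroup H] [InnerProductSpace ℝ H]
    (r s ρr ρs : ℝ) (hρr : 0 ≤ ρr) (hρs : 0 ≤ ρs)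
    (a c d e m w z : H)
    (hI : ⟪m, w⟫ + ⟪d, w⟫ + r * ⟪a, w⟫ ≤ 0)
    (hII : 0 ≤ ⟪m, z⟫ + ⟪e, z⟫ + r * ⟪c, z⟫)
    (hIII : ⟪m, a⟫ + ⟪m, c⟫ - s*(⟪m,d⟫+⟪m,e⟫) ≤ ⟪m,w⟫ - ⟪m,z⟫) :
    ρs*‖(w-a)+ρr•(d+r•a)‖^2 + ρs*‖(z+c)-ρr•(e+r•c)‖^2
      + ρr*‖(m+d)+ρs•(a-s•d)‖^2 + ρr*‖(m+e)+ρs•(c-s•e)‖^2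
      + ρr*ρs*((2*r - ρr*r^2 - ρs - |ρr*r-ρs*s|)*(‖a‖^2+‖c‖^2)
        + (2*s - ρr - ρs*s^2 - |ρr*r-ρs*s|)*(‖d‖^2+‖e‖^2))
      ≤ ρs*‖w-a‖^2 + ρs*‖z+c‖^2 + ρr*‖m+d‖^2 + ρr*‖m+e‖^2 := by
  have H1 : 2*ρr*ρs*(⟪m, w⟫ + ⟪d, w⟫ + r * ⟪a, w⟫) ≤ 0 :=
    mul_nonpos_of_nonneg_of_nonpos (by positivity) hI
  have H2 : 0 ≤ 2*ρr*ρs*(⟪m, z⟫ + ⟪e, z⟫ + r * ⟪c, z⟫) :=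
    mul_nonneg (by positivity) hII
  have H3 : 2*ρr*ρs*(⟪m, a⟫ + ⟪m, c⟫ - s*(⟪m,d⟫+⟪m,e⟫)) ≤ 2*ρr*ρs*(⟪m,w⟫ - ⟪m,z⟫) :=
    mul_le_mul_of_nonneg_left hIII (by positivity)
  have H4 := alg3_quad (ρr*r-ρs*s) ρr ρs hρr hρs a d
  have H5 := alg3_quad (ρr*r-ρs*s) ρr ρs hρr hρs c e
  have c1 : ⟪w,d⟫ = ⟪d,w⟫ := real_inner_comm _ _
  have c2 : ⟪w,a⟫ = ⟪a,w⟫ := real_inner_comm _ _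
  have c3 : ⟪z,e⟫ = ⟪e,z⟫ := real_inner_comm _ _
  have c4 : ⟪z,c⟫ = ⟪c,z⟫ := real_inner_comm _ _
  have c5 : ⟪d,a⟫ = ⟪a,d⟫ := real_inner_comm _ _
  have c6 : ⟪e,c⟫ = ⟪c,e⟫ := real_inner_comm _ _
  simp only [norm_add_sq_real, norm_sub_sq_real, inner_add_left, inner_add_right,
    inner_sub_left, inner_sub_right, real_inner_smul_left, real_inner_smul_right,
    norm_smul, Real.norm_eq_abs, mul_pow, sq_abs, real_inner_self_eq_norm_sq,
    abs_of_nonneg hρr, abs_of_nonneg hρs] at H1 H2 H3 H4 H5 ⊢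
  rw [c1, c2, c3, c4, c5, c6]
  linarith [H1, H2, H3, H4, H5]

lemma sq_tendsto_zero {f : ℕ → ℝ} (hf : ∀ n, 0 ≤ f n)
    (h : Tendsto (fun n => (f n)^2) atTop (𝓝 0)) : Tendsto f atTop (𝓝 0) := by
  have h2 := h.sqrt
  rw [Real.sqrt_zero] at h2
  exact h2.congr (fun n => Real.sqrt_sq (hf n))

set_option maxHeartbeats 2000000 in
/-- For Algorithm-3 iterates, the residuals
‖Bφⁿ − pⁿ‖, ‖bⁿ − qⁿ‖, ‖μⁿ − νⁿ‖, ‖μⁿ − ηⁿ‖, ‖νⁿ − νⁿ⁻¹‖, ‖ηⁿ − ηⁿ⁻¹‖,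
‖pⁿ − pⁿ⁻¹‖, ‖bⁿ − bⁿ⁻¹‖ and I(μⁿ) − I(μ*) − ⟨μⁿ − μ*, p* − b*⟩ all tend to 0. -/
theorem algorithm3_residuals_tendsto_zero
    {V H : Type*} [NormedAddCommGroup V] [InnerProductSpace ℝ V] [CompleteSpace V]
    [NormedAddCommGroup H] [InnerProductSpace ℝ H] [CompleteSpace H]
    (B : V →L[ℝ] H) (F : H → ℝ) (G : V → ℝ) (I : H → ℝ)
    (hFconv : ConvexOn ℝ Set.univ F) (hFlsc : LowerSemicontinuous F)
    (hGconv : ConvexOn ℝ Set.univ G) (hGlsc : LowerSemicontinuous G)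
    (hIconv : ConvexOn ℝ Set.univ I) (hIlsc : LowerSemicontinuous I)
    (L : V → H → H → ℝ)
    (hL : ∀ (φ' : V) (q' μ' : H), L φ' q' μ' = F q' + G φ' - I μ' + ⟪μ', B φ' - q'⟫)
    (r s ρr ρs : ℝ) (hr : 0 < r) (hs : 0 < s) (hρr : 0 < ρr) (hρs : 0 < ρs)
    (hstep1 : 0 < 2*s - ρr - ρs*s^2 - |ρr*r - ρs*s|)
    (hstep2 : 0 < 2*r - ρr*r^2 - ρs - |ρr*r - ρs*s|)
    (φs : V) (qs μs : H) (ps bs : H) (hps : ps = B φs) (hbs : bs = qs)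
    (hsaddle : ∀ (φ' : V) (q' μ' : H), L φs qs μ' ≤ L φs qs μs ∧ L φs qs μs ≤ L φ' q' μs)
    (φ : ℕ → V) (q μ p b ν η : ℕ → H)
    (hi : ∀ n, 1 ≤ n → ∀ φ' : V,
      G φ' - G (φ n) + ⟪ν (n-1), B φ' - B (φ n)⟫
        + r * ⟪B (φ n) - p (n-1), B φ' - B (φ n)⟫ ≥ 0)
    (hii : ∀ n, 1 ≤ n → ∀ q' : H,
      F q' - F (q n) + ⟪η (n-1), q n - q'⟫ + r * ⟪b (n-1) - q n, q n - q'⟫ ≥ 0)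
    (hiii : ∀ n, 1 ≤ n → ∀ μ' : H,
      I μ' - I (μ n) + ⟪μ n - μ', p (n-1) - b (n-1)⟫ - s * ⟪μ n - μ', μ n - ν (n-1)⟫
        - s * ⟪μ n - μ', μ n - η (n-1)⟫ ≥ 0)
    (hiv : ∀ n, 1 ≤ n →
      p n = p (n-1) - ρr • (μ n - ν (n-1) + r • (p (n-1) - B (φ n))) ∧
      b n = b (n-1) - ρr • (η (n-1) - μ n + r • (b (n-1) - q n)))
    (hv : ∀ n, 1 ≤ n →
      ν n = ν (n-1) + ρs • (B (φ n) - p (n-1) - s • (ν (n-1) - μ n)) ∧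
      η n = η (n-1) + ρs • (b (n-1) - q n - s • (η (n-1) - μ n)))
    :
    Tendsto (fun n => ‖B (φ n) - p n‖) atTop (nhds 0) ∧
    Tendsto (fun n => ‖b n - q n‖) atTop (nhds 0) ∧
    Tendsto (fun n => ‖μ n - ν n‖) atTop (nhds 0) ∧
    Tendsto (fun n => ‖μ n - η n‖) atTop (nhds 0) ∧
    Tendsto (fun n => ‖ν n - ν (n-1)‖) atTop (nhds 0) ∧
    Tendsto (fun n => ‖η n - η (n-1)‖) atTop (nhds 0) ∧
    Tendsto (fun n => ‖p n - p (n-1)‖) atTop (nhds 0) ∧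
    Tendsto (fun n => ‖b n - b (n-1)‖) atTop (nhds 0) ∧
    Tendsto (fun n => I (μ n) - I μs - ⟪μ n - μs, ps - bs⟫) atTop (nhds 0) := by
  have hpb : ps - bs = B φs - qs := by rw [hps, hbs]
  -- saddle point optimality inequalities
  have sadG : ∀ φ' : V, 0 ≤ G φ' - G φs + ⟪μs, B φ' - B φs⟫ := by
    intro φ'
    have h := (hsaddle φ' qs μs).2
    rw [hL, hL] at h
    simp only [inner_sub_right] at h ⊢
    linarith
  have sadF : ∀ q' : H, 0 ≤ F q' - F qs + ⟪μs, qs - q'⟫ := by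
    intro q'
    have h := (hsaddle φs q' μs).2
    rw [hL, hL] at h
    simp only [inner_sub_right] at h ⊢
    linarith
  have sadI : ∀ μ' : H, 0 ≤ I μ' - I μs - ⟪μ' - μs, B φs - qs⟫ := by
    intro μ'
    have h := (hsaddle φs qs μ').1
    rw [hL, hL] at h
    simp only [inner_sub_left, inner_sub_right] at h ⊢
    linarith
  set A : ℕ → H := fun n => B (φ n) - p (n-1) with hA
  set Cc : ℕ → H := fun n => b (n-1) - q n with hCc
  set D : ℕ → H := fun n => ν (n-1) - μ n with hD
  set E : ℕ → H := fun n => η (n-1) - μ n with hE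
  set M : ℕ → H := fun n => μ n - μs with hM
  set W : ℕ → H := fun n => B (φ n) - B φs with hW
  set Z : ℕ → H := fun n => q n - qs with hZ
  -- variational inequalities combined with saddle point
  have hIn : ∀ n, 1 ≤ n → ⟪M n, W n⟫ + ⟪D n, W n⟫ + r * ⟪A n, W n⟫ ≤ 0 := by
    intro n hn
    have g1 := hi n hn φs
    have g2 := sadG (φ n)
    simp only [hA, hD, hM, hW, inner_sub_left, inner_sub_right] at g1 g2 ⊢
    linarith
  have hIIn : ∀ n, 1 ≤ n → 0 ≤ ⟪M n, Z n⟫ + ⟪E n, Z n⟫ + r * ⟪Cc n, Z n⟫ := by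
    intro n hn
    have g1 := hii n hn qs
    have g2 := sadF (q n)
    simp only [hCc, hE, hM, hZ, inner_sub_left, inner_sub_right] at g1 g2 ⊢
    linarith
  have hIIIn : ∀ n, 1 ≤ n →
      ⟪M n, A n⟫ + ⟪M n, Cc n⟫ - s*(⟪M n, D n⟫+⟪M n, E n⟫) ≤ ⟪M n, W n⟫ - ⟪M n, Z n⟫ := by
    intro n hn
    have g1 := hiii n hn μs
    have g2 := sadI (μ n)
    simp only [hA, hCc, hD, hE, hM, hW, hZ, inner_sub_left, inner_sub_right] at g1 g2 ⊢
    linarith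
  -- vector identities
  have vep : ∀ n : ℕ, p (n-1) - ps = W n - A n := by
    intro n; simp only [hW, hA, hps]; abel
  have veb : ∀ n : ℕ, b (n-1) - bs = Z n + Cc n := by
    intro n; simp only [hZ, hCc, hbs]; abel
  have venu : ∀ n : ℕ, ν (n-1) - μs = M n + D n := by
    intro n; simp only [hM, hD]; abel
  have veet : ∀ n : ℕ, η (n-1) - μs = M n + E n := by
    intro n; simp only [hM, hE]; abel
  have vp : ∀ n, 1 ≤ n → p n - ps = (W n - A n) + ρr•(D n + r•A n) := by
    intro n hn; rw [(hiv n hn).1]; simp only [hW, hA, hD, hps]; module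
  have vb : ∀ n, 1 ≤ n → b n - bs = (Z n + Cc n) - ρr•(E n + r•Cc n) := by
    intro n hn; rw [(hiv n hn).2]; simp only [hZ, hCc, hE, hbs]; module
  have vnu : ∀ n, 1 ≤ n → ν n - μs = (M n + D n) + ρs•(A n - s•D n) := by
    intro n hn; rw [(hv n hn).1]; simp only [hM, hD, hA]; module
  have vet : ∀ n, 1 ≤ n → η n - μs = (M n + E n) + ρs•(Cc n - s•E n) := by
    intro n hn; rw [(hv n hn).2]; simp only [hM, hE, hCc]; module
  -- Lyapunov functional
  obtain ⟨Θ, hΘval⟩ : ∃ f : ℕ → ℝ, ∀ m : ℕ, f m =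
      ρs*(‖p m - ps‖^2 + ‖b m - bs‖^2) + ρr*(‖ν m - μs‖^2 + ‖η m - μs‖^2) :=
    ⟨_, fun m => rfl⟩
  have key : ∀ n, 1 ≤ n →
      Θ n + ρr*ρs*((2*r - ρr*r^2 - ρs - |ρr*r-ρs*s|)*(‖A n‖^2+‖Cc n‖^2)
        + (2*s - ρr - ρs*s^2 - |ρr*r-ρs*s|)*(‖D n‖^2+‖E n‖^2)) ≤ Θ (n-1) := by
    intro n hn
    have hstep := alg3_step r s ρr ρs hρr.le hρs.le (A n) (Cc n) (D n) (E n) (M n) (W n) (Z n)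
      (hIn n hn) (hIIn n hn) (hIIIn n hn)
    rw [hΘval n, hΘval (n-1), vp n hn, vb n hn, vnu n hn, vet n hn,
      vep n, veb n, venu n, veet n]
    linarith
  have hal : (0:ℝ) < 2*r - ρr*r^2 - ρs - |ρr*r-ρs*s| := hstep2
  have hbe : (0:ℝ) < 2*s - ρr - ρs*s^2 - |ρr*r-ρs*s| := hstep1
  have hΘ0 : ∀ n, 0 ≤ Θ n := by
    intro n; rw [hΘval n]; positivity
  have hresnn : ∀ n : ℕ, 0 ≤ (2*r - ρr*r^2 - ρs - |ρr*r-ρs*s|)*(‖A n‖^2+‖Cc n‖^2)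
        + (2*s - ρr - ρs*s^2 - |ρr*r-ρs*s|)*(‖D n‖^2+‖E n‖^2) := by
    intro n
    have h1 := mul_nonneg hal.le (by positivity : (0:ℝ) ≤ ‖A n‖^2+‖Cc n‖^2)
    have h2 := mul_nonneg hbe.le (by positivity : (0:ℝ) ≤ ‖D n‖^2+‖E n‖^2)
    linarith
  have hanti : Antitone Θ := by
    apply antitone_nat_of_succ_le
    intro n
    have h := key (n+1) (Nat.le_add_left 1 n)
    simp only [Nat.add_sub_cancel] at h
    have h2 := mul_nonneg (mul_nonneg hρr.le hρs.le) (hresnn (n+1))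
    linarith
  have hbdd : BddBelow (Set.range Θ) := ⟨0, by rintro x ⟨n, rfl⟩; exact hΘ0 n⟩
  have hconv : Tendsto Θ atTop (𝓝 (⨅ n, Θ n)) := tendsto_atTop_ciInf hanti hbdd
  have hdiff : Tendsto (fun n => Θ n - Θ (n+1)) atTop (𝓝 0) := by
    have h2 : Tendsto (fun n => Θ (n+1)) atTop (𝓝 (⨅ n, Θ n)) :=
      hconv.comp (tendsto_add_atTop_nat 1)
    simpa using hconv.sub h2
  -- combined squared residual tends to zero
  have hStend : Tendsto (fun n => (2*r - ρr*r^2 - ρs - |ρr*r-ρs*s|)*(‖A (n+1)‖^2+‖Cc (n+1)‖^2)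
      + (2*s - ρr - ρs*s^2 - |ρr*r-ρs*s|)*(‖D (n+1)‖^2+‖E (n+1)‖^2)) atTop (𝓝 0) := by
    refine squeeze_zero (g := fun n => (1/(ρr*ρs)) * (Θ n - Θ (n+1)))
      (fun n => hresnn (n+1)) (fun n => ?_) ?_
    · have h := key (n+1) (Nat.le_add_left 1 n)
      simp only [Nat.add_sub_cancel] at h
      have h2 : ρr*ρs*((2*r - ρr*r^2 - ρs - |ρr*r-ρs*s|)*(‖A (n+1)‖^2+‖Cc (n+1)‖^2)
          + (2*s - ρr - ρs*s^2 - |ρr*r-ρs*s|)*(‖D (n+1)‖^2+‖E (n+1)‖^2)) ≤ Θ n - Θ (n+1) := by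
        linarith
      have h3 := mul_le_mul_of_nonneg_left h2 (by positivity : (0:ℝ) ≤ 1/(ρr*ρs))
      calc (2*r - ρr*r^2 - ρs - |ρr*r-ρs*s|)*(‖A (n+1)‖^2+‖Cc (n+1)‖^2)
          + (2*s - ρr - ρs*s^2 - |ρr*r-ρs*s|)*(‖D (n+1)‖^2+‖E (n+1)‖^2)
          = 1/(ρr*ρs) * (ρr*ρs*((2*r - ρr*r^2 - ρs - |ρr*r-ρs*s|)*(‖A (n+1)‖^2+‖Cc (n+1)‖^2)
            + (2*s - ρr - ρs*s^2 - |ρr*r-ρs*s|)*(‖D (n+1)‖^2+‖E (n+1)‖^2))) := by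
            field_simp
        _ ≤ 1/(ρr*ρs) * (Θ n - Θ (n+1)) := h3
    · simpa using hdiff.const_mul (1/(ρr*ρs))
  have compsq : ∀ (x : ℕ → H) (co : ℝ), 0 < co →
      (∀ n : ℕ, co*‖x (n+1)‖^2 ≤ (2*r - ρr*r^2 - ρs - |ρr*r-ρs*s|)*(‖A (n+1)‖^2+‖Cc (n+1)‖^2)
      + (2*s - ρr - ρs*s^2 - |ρr*r-ρs*s|)*(‖D (n+1)‖^2+‖E (n+1)‖^2)) →
      Tendsto x atTop (𝓝 0) := by
    intro x co hco hb
    have hsq : Tendsto (fun n => ‖x (n+1)‖^2) atTop (𝓝 0) := by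
      refine squeeze_zero (g := fun n => (1/co) * ((2*r - ρr*r^2 - ρs - |ρr*r-ρs*s|)*(‖A (n+1)‖^2+‖Cc (n+1)‖^2)
          + (2*s - ρr - ρs*s^2 - |ρr*r-ρs*s|)*(‖D (n+1)‖^2+‖E (n+1)‖^2)))
        (fun n => sq_nonneg _) (fun n => ?_) ?_
      · have h3 := mul_le_mul_of_nonneg_left (hb n) (by positivity : (0:ℝ) ≤ 1/co)
        calc ‖x (n+1)‖^2 = 1/co * (co * ‖x (n+1)‖^2) := by field_simp
          _ ≤ _ := h3
      · simpa using hStend.const_mul (1/co)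
    have h1 : Tendsto (fun n => ‖x (n+1)‖) atTop (𝓝 0) :=
      sq_tendsto_zero (fun n => norm_nonneg _) hsq
    have h2 : Tendsto (fun n => x (n+1)) atTop (𝓝 0) :=
      tendsto_zero_iff_norm_tendsto_zero.2 h1
    exact (tendsto_add_atTop_iff_nat 1).1 h2
  have hAv : Tendsto A atTop (𝓝 0) := by
    refine compsq A _ hal (fun n => ?_)
    have h1 := mul_nonneg hal.le (sq_nonneg ‖Cc (n+1)‖)
    have h2 := mul_nonneg hbe.le (sq_nonneg ‖D (n+1)‖)
    have h3 := mul_nonneg hbe.le (sq_nonneg ‖E (n+1)‖)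
    linarith
  have hCv : Tendsto Cc atTop (𝓝 0) := by
    refine compsq Cc _ hal (fun n => ?_)
    have h1 := mul_nonneg hal.le (sq_nonneg ‖A (n+1)‖)
    have h2 := mul_nonneg hbe.le (sq_nonneg ‖D (n+1)‖)
    have h3 := mul_nonneg hbe.le (sq_nonneg ‖E (n+1)‖)
    linarith
  have hDv : Tendsto D atTop (𝓝 0) := by
    refine compsq D _ hbe (fun n => ?_)
    have h1 := mul_nonneg hal.le (sq_nonneg ‖A (n+1)‖)
    have h2 := mul_nonneg hal.le (sq_nonneg ‖Cc (n+1)‖)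
    have h3 := mul_nonneg hbe.le (sq_nonneg ‖E (n+1)‖)
    linarith
  have hEv : Tendsto E atTop (𝓝 0) := by
    refine compsq E _ hbe (fun n => ?_)
    have h1 := mul_nonneg hal.le (sq_nonneg ‖A (n+1)‖)
    have h2 := mul_nonneg hal.le (sq_nonneg ‖Cc (n+1)‖)
    have h3 := mul_nonneg hbe.le (sq_nonneg ‖D (n+1)‖)
    linarith
  -- limits of vector combinations -> norm limits, goals 1-8
  have normlim : ∀ (f g : ℕ → H), Tendsto g atTop (𝓝 0) → (∀ n, 1 ≤ n → f n = g n) →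
      Tendsto (fun n => ‖f n‖) atTop (𝓝 0) := by
    intro f g hg hfg
    refine (tendsto_zero_iff_norm_tendsto_zero.1 hg).congr' ?_
    filter_upwards [eventually_ge_atTop 1] with n hn
    rw [hfg n hn]
  have lim1 : Tendsto (fun n => ‖B (φ n) - p n‖) atTop (𝓝 0) := by
    refine normlim _ (fun n => A n - ρr•(D n + r•A n)) ?_ ?_
    · simpa using hAv.sub ((hDv.add (hAv.const_smul r)).const_smul ρr)
    · intro n hn; rw [(hiv n hn).1]; simp only [hA, hD]; module
  have lim2 : Tendsto (fun n => ‖b n - q n‖) atTop (𝓝 0) := by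
    refine normlim _ (fun n => Cc n - ρr•(E n + r•Cc n)) ?_ ?_
    · simpa using hCv.sub ((hEv.add (hCv.const_smul r)).const_smul ρr)
    · intro n hn; rw [(hiv n hn).2]; simp only [hCc, hE]; module
  have lim3 : Tendsto (fun n => ‖μ n - ν n‖) atTop (𝓝 0) := by
    refine normlim _ (fun n => -D n - ρs•(A n - s•D n)) ?_ ?_
    · simpa using hDv.neg.sub ((hAv.sub (hDv.const_smul s)).const_smul ρs)
    · intro n hn; rw [(hv n hn).1]; simp only [hA, hD]; module
  have lim4 : Tendsto (fun n => ‖μ n - η n‖) atTop (𝓝 0) := by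
    refine normlim _ (fun n => -E n - ρs•(Cc n - s•E n)) ?_ ?_
    · simpa using hEv.neg.sub ((hCv.sub (hEv.const_smul s)).const_smul ρs)
    · intro n hn; rw [(hv n hn).2]; simp only [hCc, hE]; module
  have lim5 : Tendsto (fun n => ‖ν n - ν (n-1)‖) atTop (𝓝 0) := by
    refine normlim _ (fun n => ρs•(A n - s•D n)) ?_ ?_
    · simpa using (hAv.sub (hDv.const_smul s)).const_smul ρs
    · intro n hn; rw [(hv n hn).1]; simp only [hA, hD]; module
  have lim6 : Tendsto (fun n => ‖η n - η (n-1)‖) atTop (𝓝 0) := by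
    refine normlim _ (fun n => ρs•(Cc n - s•E n)) ?_ ?_
    · simpa using (hCv.sub (hEv.const_smul s)).const_smul ρs
    · intro n hn; rw [(hv n hn).2]; simp only [hCc, hE]; module
  have lim7 : Tendsto (fun n => ‖p n - p (n-1)‖) atTop (𝓝 0) := by
    refine normlim _ (fun n => ρr•(D n + r•A n)) ?_ ?_
    · simpa using (hDv.add (hAv.const_smul r)).const_smul ρr
    · intro n hn; rw [(hiv n hn).1]; simp only [hA, hD]; module
  have lim8 : Tendsto (fun n => ‖b n - b (n-1)‖) atTop (𝓝 0) := by
    refine normlim _ (fun n => -(ρr•(E n + r•Cc n))) ?_ ?_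
    · simpa using ((hEv.add (hCv.const_smul r)).const_smul ρr).neg
    · intro n hn; rw [(hiv n hn).2]; simp only [hCc, hE]; module
  -- goal 9
  have hΘtop : ∀ n, Θ n ≤ Θ 0 := fun n => hanti (Nat.zero_le n)
  have sqb : ∀ (x : H) (co : ℝ), 0 < co → co * ‖x‖^2 ≤ Θ 0 → ‖x‖ ≤ Real.sqrt (Θ 0 / co) := by
    intro x co hco hb
    have h1 : ‖x‖^2 ≤ Θ 0 / co := by
      rw [le_div_iff₀ hco]; nlinarith
    calc ‖x‖ = Real.sqrt (‖x‖^2) := (Real.sqrt_sq (norm_nonneg _)).symm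
      _ ≤ Real.sqrt (Θ 0 / co) := Real.sqrt_le_sqrt h1
  have hnormb : ∀ n : ℕ, ‖p n - ps‖ ≤ Real.sqrt (Θ 0 / ρs) ∧ ‖b n - bs‖ ≤ Real.sqrt (Θ 0 / ρs)
      ∧ ‖ν n - μs‖ ≤ Real.sqrt (Θ 0 / ρr) ∧ ‖η n - μs‖ ≤ Real.sqrt (Θ 0 / ρr) := by
    intro n
    have hTn : ρs*(‖p n - ps‖^2 + ‖b n - bs‖^2) + ρr*(‖ν n - μs‖^2 + ‖η n - μs‖^2) ≤ Θ 0 := by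
      rw [← hΘval n]; exact hΘtop n
    have n1 := mul_nonneg hρs.le (sq_nonneg ‖p n - ps‖)
    have n2 := mul_nonneg hρs.le (sq_nonneg ‖b n - bs‖)
    have n3 := mul_nonneg hρr.le (sq_nonneg ‖ν n - μs‖)
    have n4 := mul_nonneg hρr.le (sq_nonneg ‖η n - μs‖)
    exact ⟨sqb _ _ hρs (by linarith), sqb _ _ hρs (by linarith),
      sqb _ _ hρr (by linarith), sqb _ _ hρr (by linarith)⟩
  have hresb : ∀ n, 1 ≤ n →
      ‖A n‖ ≤ Real.sqrt (Θ 0 / (ρr*ρs*(2*r - ρr*r^2 - ρs - |ρr*r-ρs*s|)))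
      ∧ ‖Cc n‖ ≤ Real.sqrt (Θ 0 / (ρr*ρs*(2*r - ρr*r^2 - ρs - |ρr*r-ρs*s|)))
      ∧ ‖D n‖ ≤ Real.sqrt (Θ 0 / (ρr*ρs*(2*s - ρr - ρs*s^2 - |ρr*r-ρs*s|)))
      ∧ ‖E n‖ ≤ Real.sqrt (Θ 0 / (ρr*ρs*(2*s - ρr - ρs*s^2 - |ρr*r-ρs*s|))) := by
    intro n hn
    have hk := key n hn
    have h0 : Θ (n-1) ≤ Θ 0 := hΘtop _
    have h0' : 0 ≤ Θ n := hΘ0 n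
    have n1 := mul_nonneg hal.le (sq_nonneg ‖A n‖)
    have n2 := mul_nonneg hal.le (sq_nonneg ‖Cc n‖)
    have n3 := mul_nonneg hbe.le (sq_nonneg ‖D n‖)
    have n4 := mul_nonneg hbe.le (sq_nonneg ‖E n‖)
    have hrs : (0:ℝ) < ρr*ρs := mul_pos hρr hρs
    have hrsal : (0:ℝ) < ρr*ρs*(2*r - ρr*r^2 - ρs - |ρr*r-ρs*s|) := mul_pos hrs hal
    have hrsbe : (0:ℝ) < ρr*ρs*(2*s - ρr - ρs*s^2 - |ρr*r-ρs*s|) := mul_pos hrs hbe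
    have m1 := mul_nonneg hrs.le n1
    have m2 := mul_nonneg hrs.le n2
    have m3 := mul_nonneg hrs.le n3
    have m4 := mul_nonneg hrs.le n4
    exact ⟨sqb _ _ hrsal (by linarith only [hk, h0, h0', m1, m2, m3, m4]),
      sqb _ _ hrsal (by linarith only [hk, h0, h0', m1, m2, m3, m4]),
      sqb _ _ hrsbe (by linarith only [hk, h0, h0', m1, m2, m3, m4]),
      sqb _ _ hrsbe (by linarith only [hk, h0, h0', m1, m2, m3, m4])⟩
  set K1 : ℝ := Real.sqrt (Θ 0 / ρs) + Real.sqrt (Θ 0 / (ρr*ρs*(2*r - ρr*r^2 - ρs - |ρr*r-ρs*s|))) with hK1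
  set K2 : ℝ := Real.sqrt (Θ 0 / ρr) + Real.sqrt (Θ 0 / (ρr*ρs*(2*s - ρr - ρs*s^2 - |ρr*r-ρs*s|))) with hK2
  have hWb : ∀ n, 1 ≤ n → ‖W n‖ ≤ K1 := by
    intro n hn
    have h1 : W n = (p (n-1) - ps) + A n := by rw [vep n]; abel
    rw [h1, hK1]
    exact le_trans (norm_add_le _ _) (add_le_add (hnormb (n-1)).1 (hresb n hn).1)
  have hZb : ∀ n, 1 ≤ n → ‖Z n‖ ≤ K1 := by
    intro n hn
    have h1 : Z n = (b (n-1) - bs) - Cc n := by rw [veb n]; abel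
    rw [h1, hK1]
    exact le_trans (norm_sub_le _ _) (add_le_add (hnormb (n-1)).2.1 (hresb n hn).2.1)
  have hMb : ∀ n, 1 ≤ n → ‖M n‖ ≤ K2 := by
    intro n hn
    have h1 : M n = (ν (n-1) - μs) - D n := by rw [venu n]; abel
    rw [h1, hK2]
    exact le_trans (norm_sub_le _ _) (add_le_add (hnormb (n-1)).2.2.1 (hresb n hn).2.2.1)
  have hlow : ∀ n : ℕ, 0 ≤ I (μ n) - I μs - ⟪μ n - μs, ps - bs⟫ := by
    intro n; rw [hpb]; exact sadI (μ n)
  have hup : ∀ n, 1 ≤ n → I (μ n) - I μs - ⟪μ n - μs, ps - bs⟫ ≤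
      ‖D n + r•A n‖*K1 + ‖E n + r•Cc n‖*K1
      + K2*‖A n‖ + K2*‖Cc n‖ + s*(K2*‖D n‖) + s*(K2*‖E n‖) := by
    intro n hn
    have main : I (μ n) - I μs - ⟪μ n - μs, ps - bs⟫ ≤
        ⟪M n, W n⟫ - ⟪M n, Z n⟫ - ⟪M n, A n⟫ - ⟪M n, Cc n⟫ + s*⟪M n, D n⟫ + s*⟪M n, E n⟫ := by
      have g1 := hiii n hn μs
      simp only [hpb, hA, hCc, hD, hE, hM, hW, hZ, inner_sub_left, inner_sub_right] at g1 ⊢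
      linarith
    have g2 : ⟪M n, W n⟫ ≤ ‖D n + r•A n‖*K1 := by
      have h := hIn n hn
      have hcs : -⟪D n + r•A n, W n⟫ ≤ ‖D n + r•A n‖*‖W n‖ := by
        have h1 := abs_real_inner_le_norm (D n + r•A n) (W n)
        have h2 := neg_abs_le ⟪D n + r•A n, W n⟫
        linarith
      have h3 : ‖D n + r•A n‖*‖W n‖ ≤ ‖D n + r•A n‖*K1 :=
        mul_le_mul_of_nonneg_left (hWb n hn) (norm_nonneg _)
      simp only [inner_add_left, real_inner_smul_left] at hcs
      linarith
    have g3 : -⟪M n, Z n⟫ ≤ ‖E n + r•Cc n‖*K1 := by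
      have h := hIIn n hn
      have hcs : ⟪E n + r•Cc n, Z n⟫ ≤ ‖E n + r•Cc n‖*‖Z n‖ := by
        have h1 := abs_real_inner_le_norm (E n + r•Cc n) (Z n)
        have h2 := le_abs_self ⟪E n + r•Cc n, Z n⟫
        linarith
      have h3 : ‖E n + r•Cc n‖*‖Z n‖ ≤ ‖E n + r•Cc n‖*K1 :=
        mul_le_mul_of_nonneg_left (hZb n hn) (norm_nonneg _)
      simp only [inner_add_left, real_inner_smul_left] at hcs
      linarith
    have csb : ∀ y : H, -⟪M n, y⟫ ≤ K2*‖y‖ ∧ ⟪M n, y⟫ ≤ K2*‖y‖ := by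
      intro y
      have h1 := abs_real_inner_le_norm (M n) y
      have h2 := neg_abs_le ⟪M n, y⟫
      have h3 := le_abs_self ⟪M n, y⟫
      have h4 : ‖M n‖*‖y‖ ≤ K2*‖y‖ := mul_le_mul_of_nonneg_right (hMb n hn) (norm_nonneg _)
      constructor <;> linarith
    have g4 := (csb (A n)).1
    have g5 := (csb (Cc n)).1
    have g6 := mul_le_mul_of_nonneg_left (csb (D n)).2 hs.le
    have g7 := mul_le_mul_of_nonneg_left (csb (E n)).2 hs.le
    linarith
  have lim9 : Tendsto (fun n => I (μ n) - I μs - ⟪μ n - μs, ps - bs⟫) atTop (𝓝 0) := by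
    have hDA : Tendsto (fun n => ‖D n + r•A n‖) atTop (𝓝 0) :=
      tendsto_zero_iff_norm_tendsto_zero.1 (by simpa using hDv.add (hAv.const_smul r))
    have hEC : Tendsto (fun n => ‖E n + r•Cc n‖) atTop (𝓝 0) :=
      tendsto_zero_iff_norm_tendsto_zero.1 (by simpa using hEv.add (hCv.const_smul r))
    have hnA : Tendsto (fun n => ‖A n‖) atTop (𝓝 0) := tendsto_zero_iff_norm_tendsto_zero.1 hAv
    have hnC : Tendsto (fun n => ‖Cc n‖) atTop (𝓝 0) := tendsto_zero_iff_norm_tendsto_zero.1 hCv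
    have hnD : Tendsto (fun n => ‖D n‖) atTop (𝓝 0) := tendsto_zero_iff_norm_tendsto_zero.1 hDv
    have hnE : Tendsto (fun n => ‖E n‖) atTop (𝓝 0) := tendsto_zero_iff_norm_tendsto_zero.1 hEv
    have hU : Tendsto (fun n => ‖D n + r•A n‖*K1 + ‖E n + r•Cc n‖*K1
        + K2*‖A n‖ + K2*‖Cc n‖ + s*(K2*‖D n‖) + s*(K2*‖E n‖)) atTop (𝓝 0) := by
      have t1 := hDA.mul_const K1
      have t2 := hEC.mul_const K1
      have t3 := hnA.const_mul K2
      have t4 := hnC.const_mul K2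
      have t5 := (hnD.const_mul K2).const_mul s
      have t6 := (hnE.const_mul K2).const_mul s
      have tt := ((((t1.add t2).add t3).add t4).add t5).add t6
      simpa using tt
    refine squeeze_zero' ?_ ?_ hU
    · exact Eventually.of_forall hlow
    · filter_upwards [eventually_ge_atTop 1] with n hn
      exact hup n hn
  exact ⟨lim1, lim2, lim3, lim4, lim5, lim6, lim7, lim8, lim9⟩
end

section
/- For Algorithm-3 iterates with a saddle point (φ*, q*, μ*) of L, p* = Bφ*, b* = q*, step sizes ρ_r, ρ_s > 0 satisfying 2s − ρ_r − ρ_s s² − |ρ_r r − ρ_s s| > 0 and 2r − ρ_r r² − ρ_s − |ρ_r r − ρ_s s| > 0, and B injective with closed range: if G is uniformly convex on bounded subsets of V then φⁿ → φ* strongly in V and pⁿ → Bφ* strongly in H, and if moreover F is uniformly convex on bounded subsets of H then qⁿ → q* and bⁿ → q* strongly in H. -/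
open RealInnerProductSpace Filter Topology

/-- `u` is a subgradient of `J` at `x`. -/
def IsSubgradient {E : Type*} [NormedAddCommGroup E] [InnerProductSpace ℝ E]
    (J : E → ℝ) (x u : E) : Prop :=
  ∀ z, J z ≥ J x + ⟪u, z - x⟫

/-- `J` is uniformly convex on the set `U`. -/
def UniformlyConvexOnSet {E : Type*} [NormedAddCommGroup E] [InnerProductSpace ℝ E]
    (J : E → ℝ) (U : Set E) : Prop :=
  ∃ Ψ : ℝ → ℝ, StrictMonoOn Ψ (Set.Ici 0) ∧ Ψ 0 = 0 ∧ (∀ t, 0 ≤ t → 0 ≤ Ψ t) ∧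
    ∀ x ∈ U, ∀ y ∈ U, ∀ u v : E, IsSubgradient J x u → IsSubgradient J y v →
      ⟪u - v, x - y⟫ ≥ Ψ ‖x - y‖

/-- `J` is uniformly convex on every bounded subset of its domain. -/
def UniformlyConvexOnBoundedSets {E : Type*} [NormedAddCommGroup E] [InnerProductSpace ℝ E]
    (J : E → ℝ) : Prop :=
  ∀ U : Set E, Bornology.IsBounded U → UniformlyConvexOnSet J U

/-!
With errors measured from the saddle point, the functional
`Eₙ = ρs (‖pⁿ - Bφ*‖² + ‖bⁿ - q*‖²) + ρr (‖νⁿ - μ*‖² + ‖ηⁿ - μ*‖²)` drops at each step by `ρr ρs`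
times a sum of nonnegative terms: the residuals `‖Bφⁿ⁺¹ - pⁿ‖²`, `‖bⁿ - qⁿ⁺¹‖²`, `‖μⁿ⁺¹ - νⁿ‖²`,
`‖μⁿ⁺¹ - ηⁿ‖²`, weighted by the two step-size conditions, and the monotonicity pairings
`⟪u - u*, x - x*⟫` of the subgradients of `G`, `F`, `I` that (i)–(iii) and the saddle-point
inequalities provide. Telescoping makes these terms summable, so they tend to zero, and `pⁿ`, `bⁿ`
stay bounded. Since `B` is bounded below, `φⁿ` stays bounded too, and uniform convexity of `G`
turns the vanishing pairing into `φⁿ → φ*`; then `pⁿ → Bφ*` because `Bφⁿ⁺¹ - pⁿ → 0`. The same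
argument for `F` gives `qⁿ → q*` and `bⁿ → q*`.
-/

open Bornology Set

section General

variable {E : Type*} [NormedAddCommGroup E] [InnerProductSpace ℝ E]

theorem IsSubgradient.inner_sub_nonneg {J : E → ℝ} {x y u v : E} (hx : IsSubgradient J x u)
    (hy : IsSubgradient J y v) : 0 ≤ ⟪u - v, x - y⟫ := by
  have hxy := hx y
  have hyx := hy x
  rw [← neg_sub x y, inner_neg_right] at hxy
  rw [inner_sub_left]
  linarith

theorem mul_two_inner_le_abs_mul (t : ℝ) (u v : E) :
    t * (2 * ⟪u, v⟫) ≤ |t| * (‖u‖ ^ 2 + ‖v‖ ^ 2) := by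
  calc t * (2 * ⟪u, v⟫) ≤ |t * (2 * ⟪u, v⟫)| := le_abs_self _
    _ = |t| * (2 * |⟪u, v⟫|) := by rw [abs_mul, abs_mul, abs_two]
    _ ≤ |t| * (‖u‖ ^ 2 + ‖v‖ ^ 2) := by
        gcongr
        nlinarith [abs_real_inner_le_norm u v, sq_nonneg (‖u‖ - ‖v‖)]

end General

section Normed

variable {E : Type*} [NormedAddCommGroup E]

theorem tendsto_zero_of_norm_sq_le {ι : Type*} {l : Filter ι} {f : ι → E} {g : ι → ℝ}
    (hfg : ∀ i, ‖f i‖ ^ 2 ≤ g i) (hg : Tendsto g l (𝓝 0)) : Tendsto f l (𝓝 0) := by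
  refine squeeze_zero_norm (fun i => ?_) (by simpa using hg.sqrt)
  simpa using Real.abs_le_sqrt (hfg i)

theorem isBounded_range_of_norm_sub_sq_le {ι : Type*} {f : ι → E} (a : E) {C : ℝ}
    (h : ∀ i, ‖f i - a‖ ^ 2 ≤ C) : IsBounded (range f) :=
  (Metric.isBounded_closedBall (x := a) (r := √C)).subset <| range_subset_iff.2 fun i => by
    simpa [dist_eq_norm] using Real.abs_le_sqrt (h i)

theorem isBounded_range_of_tendsto_sub {f g : ℕ → E} (hg : IsBounded (range g))
    (h : Tendsto (fun n => f n - g n) atTop (𝓝 0)) : IsBounded (range f) :=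
  (hg.add (Metric.isBounded_range_of_tendsto _ h)).subset <| range_subset_iff.2 fun n =>
    ⟨g n, mem_range_self n, f n - g n, ⟨n, rfl⟩, add_sub_cancel (g n) (f n)⟩

theorem Filter.Tendsto.of_tendsto_sub {ι : Type*} {l : Filter ι} {f g : ι → E} {a : E}
    (hf : Tendsto f l (𝓝 a)) (h : Tendsto (fun i => f i - g i) l (𝓝 0)) :
    Tendsto g l (𝓝 a) := by
  simpa using hf.sub h

end Normed

theorem summable_of_add_le_of_nonneg {e u : ℕ → ℝ} (he : ∀ n, 0 ≤ e n) (hu : ∀ n, 0 ≤ u n)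
    (h : ∀ n, e (n + 1) + u n ≤ e n) : Summable u := by
  refine summable_of_sum_range_le (c := e 0) hu fun N => ?_
  calc ∑ i ∈ Finset.range N, u i ≤ ∑ i ∈ Finset.range N, (e i - e (i + 1)) :=
        Finset.sum_le_sum fun i _ => by linarith [h i]
    _ = e 0 - e N := Finset.sum_range_sub' e N
    _ ≤ e 0 := by linarith [he N]

theorem StrictMonoOn.tendsto_zero_of_tendsto_comp {ι : Type*} {l : Filter ι} {Ψ : ℝ → ℝ}
    (hΨ : StrictMonoOn Ψ (Ici 0)) (hΨ0 : Ψ 0 = 0) {t : ι → ℝ} (ht : ∀ i, 0 ≤ t i)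
    (h : Tendsto (fun i => Ψ (t i)) l (𝓝 0)) : Tendsto t l (𝓝 0) := by
  refine tendsto_order.2 ⟨fun a ha => Eventually.of_forall fun i => ha.trans_le (ht i),
    fun ε hε => ?_⟩
  have hΨε : 0 < Ψ ε := hΨ0 ▸ hΨ self_mem_Ici hε.le hε
  filter_upwards [h.eventually (gt_mem_nhds hΨε)] with i hi
  exact (hΨ.lt_iff_lt (ht i) hε.le).1 hi

theorem UniformlyConvexOnBoundedSets.tendsto_of_inner_sub_tendsto_zero
    {E : Type*} [NormedAddCommGroup E] [InnerProductSpace ℝ E] {J : E → ℝ}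
    (hJ : UniformlyConvexOnBoundedSets J) {x u : ℕ → E} {y v : E} (hx : IsBounded (range x))
    (hu : ∀ n, IsSubgradient J (x n) (u n)) (hv : IsSubgradient J y v)
    (h : Tendsto (fun n => ⟪u n - v, x n - y⟫) atTop (𝓝 0)) : Tendsto x atTop (𝓝 y) := by
  obtain ⟨Ψ, hΨ, hΨ0, hΨ_nonneg, hΨ_le⟩ := hJ _ (hx.insert y)
  have hΨx : Tendsto (fun n => Ψ ‖x n - y‖) atTop (𝓝 0) :=
    squeeze_zero (fun n => hΨ_nonneg _ (norm_nonneg _))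
      (fun n => hΨ_le _ (mem_insert_of_mem _ ⟨n, rfl⟩) _ (mem_insert y _) _ _ (hu n) hv) h
  exact tendsto_iff_norm_sub_tendsto_zero.2
    (hΨ.tendsto_zero_of_tendsto_comp hΨ0 (fun n => norm_nonneg _) hΨx)

section Adjoint

variable {V H : Type*} [NormedAddCommGroup V] [InnerProductSpace ℝ V] [CompleteSpace V]
  [NormedAddCommGroup H] [InnerProductSpace ℝ H] [CompleteSpace H]

open ContinuousLinearMap

theorem isSubgradient_neg_adjoint (B : V →L[ℝ] H) {G : V → ℝ} {x : V} {w : H}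
    (h : ∀ z, G z - G x + ⟪w, B z - B x⟫ ≥ 0) : IsSubgradient G x (-(adjoint B) w) := by
  intro z
  rw [inner_neg_left, adjoint_inner_left, map_sub]
  linarith [h z]

theorem inner_neg_adjoint_sub_neg_adjoint (B : V →L[ℝ] H) (w w' : H) (v v' : V) :
    ⟪-(adjoint B) w - -(adjoint B) w', v - v'⟫ = ⟪w' - w, B v - B v'⟫ := by
  rw [neg_sub_neg, ← map_sub, adjoint_inner_left, map_sub]

theorem isSubgradient_of_isSaddlePoint (B : V →L[ℝ] H) {F : H → ℝ} {G : V → ℝ} {I : H → ℝ}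
    {L : V → H → H → ℝ} (hL : ∀ φ q μ, L φ q μ = F q + G φ - I μ + ⟪μ, B φ - q⟫)
    {φs : V} {qs μs : H}
    (hsaddle : ∀ φ q μ, L φs qs μ ≤ L φs qs μs ∧ L φs qs μs ≤ L φ q μs) :
    IsSubgradient G φs (-(adjoint B) μs) ∧ IsSubgradient F qs μs ∧
      IsSubgradient I μs (B φs - qs) := by
  refine ⟨isSubgradient_neg_adjoint B fun z => ?_, fun z => ?_, fun z => ?_⟩
  · have h := (hsaddle z qs μs).2
    rw [hL, hL] at h
    rw [← sub_sub_sub_cancel_right (B z) (B φs) qs, inner_sub_right]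
    linarith
  · have h := (hsaddle φs z μs).2
    rw [hL, hL] at h
    rw [← sub_sub_sub_cancel_left qs z (B φs), inner_sub_right]
    linarith
  · have h := (hsaddle φs qs z).1
    rw [hL, hL] at h
    rw [inner_sub_right, real_inner_comm, real_inner_comm μs]
    linarith

theorem Algorithm3.isSubgradient_of_step_i (B : V →L[ℝ] H) {G : V → ℝ} {x : V} {ν p : H}
    {r : ℝ}
    (h : ∀ z, G z - G x + ⟪ν, B z - B x⟫ + r * ⟪B x - p, B z - B x⟫ ≥ 0) :
    IsSubgradient G x (-(adjoint B) (ν + r • (B x - p))) :=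
  isSubgradient_neg_adjoint B fun z => by
    rw [inner_add_left, real_inner_smul_left]
    linarith [h z]

end Adjoint

namespace Algorithm3

section Energy

variable {H : Type*} [NormedAddCommGroup H]

/-- Evaluated at the errors `p - Bφ*`, `b - q*`, `ν - μ*`, `η - μ*`. -/
def energy (ρr ρs : ℝ) (p b ν η : H) : ℝ :=
  ρs * (‖p‖ ^ 2 + ‖b‖ ^ 2) + ρr * (‖ν‖ ^ 2 + ‖η‖ ^ 2)

theorem mul_norm_sq_le_energy {ρr ρs : ℝ} (hρr : 0 ≤ ρr) (hρs : 0 ≤ ρs) (p b ν η : H) :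
    ρs * ‖p‖ ^ 2 ≤ energy ρr ρs p b ν η ∧ ρs * ‖b‖ ^ 2 ≤ energy ρr ρs p b ν η := by
  have hνη : 0 ≤ ρr * (‖ν‖ ^ 2 + ‖η‖ ^ 2) := by positivity
  have hp : 0 ≤ ρs * ‖p‖ ^ 2 := by positivity
  have hb : 0 ≤ ρs * ‖b‖ ^ 2 := by positivity
  unfold energy
  constructor <;> linarith

end Energy

variable {H : Type*} [NormedAddCommGroup H] [InnerProductSpace ℝ H]

theorem isSubgradient_of_step_ii {F : H → ℝ} {x η b : H} {r : ℝ}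
    (h : ∀ z, F z - F x + ⟪η, x - z⟫ + r * ⟪b - x, x - z⟫ ≥ 0) :
    IsSubgradient F x (η + r • (b - x)) := by
  intro z
  rw [← neg_sub x z, inner_neg_right, inner_add_left, real_inner_smul_left]
  linarith [h z]

theorem isSubgradient_of_step_iii {I : H → ℝ} {x p b ν η : H} {s : ℝ}
    (h : ∀ z, I z - I x + ⟪x - z, p - b⟫ - s * ⟪x - z, x - ν⟫ - s * ⟪x - z, x - η⟫ ≥ 0) :
    IsSubgradient I x (p - b - s • (x - ν) - s • (x - η)) := by
  intro z
  rw [← neg_sub x z, inner_neg_right, real_inner_comm, inner_sub_right, inner_sub_right,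
    real_inner_smul_right, real_inner_smul_right]
  linarith [h z]

/-- `P`, `N` are the errors of `pⁿ`, `νⁿ` and `A = Bφⁿ⁺¹ - pⁿ`, `D = μⁿ⁺¹ - νⁿ` the residuals.
The cross term `2 (ρs s - ρr r) ⟪A, D⟫` of the exact expansion is absorbed into the squares,
which is where `|ρr r - ρs s|` in the step-size conditions comes from. -/
theorem energy_half_step_le {r s ρr ρs : ℝ} (hρ : 0 ≤ ρr * ρs) (P N A D : H) :
    ρs * ‖P - ρr • (D - r • A)‖ ^ 2 + ρr * ‖N + ρs • (A + s • D)‖ ^ 2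
      + ρr * ρs * ((2 * r - ρr * r ^ 2 - ρs - |ρr * r - ρs * s|) * ‖A‖ ^ 2
        + (2 * s - ρr - ρs * s ^ 2 - |ρr * r - ρs * s|) * ‖D‖ ^ 2)
    ≤ ρs * ‖P‖ ^ 2 + ρr * ‖N‖ ^ 2
      + 2 * ρr * ρs * (⟪N + r • A, P + A⟫ - ⟪N + D, P - s • D⟫) := by
  have hcross := mul_le_mul_of_nonneg_left (mul_two_inner_le_abs_mul (ρs * s - ρr * r) A D) hρ
  rw [abs_sub_comm] at hcross
  simp only [← real_inner_self_eq_norm_sq, inner_sub_left, inner_sub_right, inner_add_left,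
    inner_add_right, real_inner_smul_left, real_inner_smul_right] at hcross ⊢
  simp only [real_inner_comm P N, real_inner_comm P A, real_inner_comm P D, real_inner_comm N A,
    real_inner_comm N D, real_inner_comm A D] at hcross ⊢
  linarith

theorem energy_step_le {r s ρr ρs : ℝ} (hρ : 0 ≤ ρr * ρs) {a c μs p b ν η x y m p' b' ν' η' : H}
    (hp : p' = p - ρr • (m - ν + r • (p - x))) (hb : b' = b - ρr • (η - m + r • (b - y)))
    (hν : ν' = ν + ρs • (x - p - s • (ν - m))) (hη : η' = η + ρs • (b - y - s • (η - m))) :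
    energy ρr ρs (p' - a) (b' - c) (ν' - μs) (η' - μs)
      + ρr * ρs * ((2 * r - ρr * r ^ 2 - ρs - |ρr * r - ρs * s|) * (‖x - p‖ ^ 2 + ‖y - b‖ ^ 2)
        + (2 * s - ρr - ρs * s ^ 2 - |ρr * r - ρs * s|) * (‖m - ν‖ ^ 2 + ‖m - η‖ ^ 2)
        + 2 * (⟪μs - (ν + r • (x - p)), x - a⟫ + ⟪η + r • (b - y) - μs, y - c⟫
          + ⟪p - b - s • (m - ν) - s • (m - η) - (a - c), m - μs⟫))
    ≤ energy ρr ρs (p - a) (b - c) (ν - μs) (η - μs) := by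
  have hG := energy_half_step_le (r := r) (s := s) hρ (p - a) (ν - μs) (x - p) (m - ν)
  -- The `(b, η)` update is the `(p, ν)` update with the sign of the dual error reversed.
  have hF := energy_half_step_le (r := r) (s := s) hρ (b - c) (μs - η) (y - b) (η - m)
  rw [norm_sub_rev μs η, norm_sub_rev η m] at hF
  have hp' : p' - a = p - a - ρr • (m - ν - r • (x - p)) := by rw [hp]; module
  have hν' : ν' - μs = ν - μs + ρs • (x - p + s • (m - ν)) := by rw [hν]; module
  have hb' : b' - c = b - c - ρr • (η - m - r • (y - b)) := by rw [hb]; module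
  have hη' : η' - μs = -(μs - η + ρs • (y - b + s • (η - m))) := by rw [hη]; module
  have hpairG : ⟪ν - μs + r • (x - p), p - a + (x - p)⟫ = -⟪μs - (ν + r • (x - p)), x - a⟫ := by
    rw [← inner_neg_left]; congr 1 <;> abel
  have hpairF : ⟪μs - η + r • (y - b), b - c + (y - b)⟫ = -⟪η + r • (b - y) - μs, y - c⟫ := by
    rw [← inner_neg_left]; congr 1 <;> module
  have hpairI :
      ⟪ν - μs + (m - ν), p - a - s • (m - ν)⟫ + ⟪μs - η + (η - m), b - c - s • (η - m)⟫
      = ⟪p - b - s • (m - ν) - s • (m - η) - (a - c), m - μs⟫ := by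
    rw [sub_add_sub_cancel', sub_add_sub_cancel, ← neg_sub m μs, inner_neg_left, ← sub_eq_add_neg,
      ← inner_sub_right, real_inner_comm]
    congr 1; module
  rw [hpairG] at hG
  rw [hpairF] at hF
  have hI := congrArg (2 * ρr * ρs * ·) hpairI
  unfold energy
  rw [hp', hν', hb', hη', norm_neg]
  linarith

/-- `x n`, `y n`, `m n` play the roles of `Bφⁿ⁺¹`, `qⁿ⁺¹`, `μⁿ⁺¹`, and `a`, `c` of `Bφ*`, `q*`. -/
theorem tendsto_of_energy_step_le {r s ρr ρs : ℝ} (hρr : 0 < ρr) (hρs : 0 < ρs)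
    (hstep1 : 0 < 2 * s - ρr - ρs * s ^ 2 - |ρr * r - ρs * s|)
    (hstep2 : 0 < 2 * r - ρr * r ^ 2 - ρs - |ρr * r - ρs * s|)
    {a c μs : H} {x y m p b ν η : ℕ → H}
    (hp : ∀ n, p (n + 1) = p n - ρr • (m n - ν n + r • (p n - x n)))
    (hb : ∀ n, b (n + 1) = b n - ρr • (η n - m n + r • (b n - y n)))
    (hν : ∀ n, ν (n + 1) = ν n + ρs • (x n - p n - s • (ν n - m n)))
    (hη : ∀ n, η (n + 1) = η n + ρs • (b n - y n - s • (η n - m n)))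
    (hG : ∀ n, 0 ≤ ⟪μs - (ν n + r • (x n - p n)), x n - a⟫)
    (hF : ∀ n, 0 ≤ ⟪η n + r • (b n - y n) - μs, y n - c⟫)
    (hI : ∀ n, 0 ≤ ⟪p n - b n - s • (m n - ν n) - s • (m n - η n) - (a - c), m n - μs⟫) :
    Tendsto (fun n => ⟪μs - (ν n + r • (x n - p n)), x n - a⟫) atTop (𝓝 0) ∧
      Tendsto (fun n => ⟪η n + r • (b n - y n) - μs, y n - c⟫) atTop (𝓝 0) ∧
      Tendsto (fun n => x n - p n) atTop (𝓝 0) ∧ Tendsto (fun n => y n - b n) atTop (𝓝 0) ∧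
      IsBounded (range p) ∧ IsBounded (range b) := by
  set E : ℕ → ℝ := fun n => energy ρr ρs (p n - a) (b n - c) (ν n - μs) (η n - μs) with hE
  set T : ℕ → ℝ := fun n =>
    (2 * r - ρr * r ^ 2 - ρs - |ρr * r - ρs * s|) * (‖x n - p n‖ ^ 2 + ‖y n - b n‖ ^ 2)
      + (2 * s - ρr - ρs * s ^ 2 - |ρr * r - ρs * s|) * (‖m n - ν n‖ ^ 2 + ‖m n - η n‖ ^ 2)
      + 2 * (⟪μs - (ν n + r • (x n - p n)), x n - a⟫ + ⟪η n + r • (b n - y n) - μs, y n - c⟫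
        + ⟪p n - b n - s • (m n - ν n) - s • (m n - η n) - (a - c), m n - μs⟫) with hT
  have hρ : 0 < ρr * ρs := mul_pos hρr hρs
  have hstep : ∀ n, E (n + 1) + ρr * ρs * T n ≤ E n := fun n =>
    energy_step_le hρ.le (hp n) (hb n) (hν n) (hη n)
  have hR_nonneg : ∀ n, 0 ≤ (2 * r - ρr * r ^ 2 - ρs - |ρr * r - ρs * s|) * ‖x n - p n‖ ^ 2 ∧
      0 ≤ (2 * r - ρr * r ^ 2 - ρs - |ρr * r - ρs * s|) * ‖y n - b n‖ ^ 2 ∧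
      0 ≤ (2 * s - ρr - ρs * s ^ 2 - |ρr * r - ρs * s|) * (‖m n - ν n‖ ^ 2 + ‖m n - η n‖ ^ 2) :=
    fun n => ⟨by positivity, by positivity, by positivity⟩
  have hT_nonneg : ∀ n, 0 ≤ T n := fun n => by
    obtain ⟨h1, h2, h3⟩ := hR_nonneg n
    simp only [hT]; linarith [hG n, hF n, hI n]
  have hE_bound : ∀ n, ρs * ‖p n - a‖ ^ 2 ≤ E n ∧ ρs * ‖b n - c‖ ^ 2 ≤ E n := fun n =>
    mul_norm_sq_le_energy hρr.le hρs.le _ _ _ _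
  have hE_nonneg : ∀ n, 0 ≤ E n := fun n => (mul_nonneg hρs.le (sq_nonneg _)).trans (hE_bound n).1
  have hT_tendsto : Tendsto T atTop (𝓝 0) :=
    ((summable_mul_left_iff hρ.ne').1 (summable_of_add_le_of_nonneg hE_nonneg
      (fun n => mul_nonneg hρ.le (hT_nonneg n)) hstep)).tendsto_atTop_zero
  have hE_le : ∀ n, E n ≤ E 0 := fun n => antitone_nat_of_succ_le
    (fun n => by linarith [hstep n, mul_nonneg hρ.le (hT_nonneg n)]) (Nat.zero_le n)
  have hT_half : Tendsto (fun n => T n / 2) atTop (𝓝 0) := by simpa using hT_tendsto.div_const 2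
  have hT_res : Tendsto (fun n => T n / (2 * r - ρr * r ^ 2 - ρs - |ρr * r - ρs * s|)) atTop
      (𝓝 0) := by simpa using hT_tendsto.div_const _
  refine ⟨squeeze_zero hG (fun n => ?_) hT_half, squeeze_zero hF (fun n => ?_) hT_half,
    tendsto_zero_of_norm_sq_le (fun n => ?_) hT_res,
    tendsto_zero_of_norm_sq_le (fun n => ?_) hT_res,
    isBounded_range_of_norm_sub_sq_le a (C := E 0 / ρs) fun n =>
      (le_div_iff₀ hρs).2 (by linarith [hE_bound n, hE_le n]),
    isBounded_range_of_norm_sub_sq_le c (C := E 0 / ρs) fun n =>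
      (le_div_iff₀ hρs).2 (by linarith [hE_bound n, hE_le n])⟩
  all_goals
    rw [le_div_iff₀ (by linarith)]
    obtain ⟨h1, h2, h3⟩ := hR_nonneg n
    simp only [hT]
    linarith [hG n, hF n, hI n]

end Algorithm3

theorem algorithm3_strong_convergence_general
    {V H : Type*} [NormedAddCommGroup V] [InnerProductSpace ℝ V] [CompleteSpace V]
    [NormedAddCommGroup H] [InnerProductSpace ℝ H] [CompleteSpace H]
    (B : V →L[ℝ] H) (F : H → ℝ) (G : V → ℝ) (I : H → ℝ)
    (L : V → H → H → ℝ)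
    (hL : ∀ (φ' : V) (q' μ' : H), L φ' q' μ' = F q' + G φ' - I μ' + ⟪μ', B φ' - q'⟫)
    (r s ρr ρs : ℝ) (hρr : 0 < ρr) (hρs : 0 < ρs)
    (hstep1 : 0 < 2*s - ρr - ρs*s^2 - |ρr*r - ρs*s|)
    (hstep2 : 0 < 2*r - ρr*r^2 - ρs - |ρr*r - ρs*s|)
    (φs : V) (qs μs : H)
    (hsaddle : ∀ (φ' : V) (q' μ' : H), L φs qs μ' ≤ L φs qs μs ∧ L φs qs μs ≤ L φ' q' μs)
    (φ : ℕ → V) (q μ p b ν η : ℕ → H)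
    (hi : ∀ n, 1 ≤ n → ∀ φ' : V,
      G φ' - G (φ n) + ⟪ν (n-1), B φ' - B (φ n)⟫
        + r * ⟪B (φ n) - p (n-1), B φ' - B (φ n)⟫ ≥ 0)
    (hii : ∀ n, 1 ≤ n → ∀ q' : H,
      F q' - F (q n) + ⟪η (n-1), q n - q'⟫ + r * ⟪b (n-1) - q n, q n - q'⟫ ≥ 0)
    (hiii : ∀ n, 1 ≤ n → ∀ μ' : H,
      I μ' - I (μ n) + ⟪μ n - μ', p (n-1) - b (n-1)⟫ - s * ⟪μ n - μ', μ n - ν (n-1)⟫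
        - s * ⟪μ n - μ', μ n - η (n-1)⟫ ≥ 0)
    (hiv : ∀ n, 1 ≤ n →
      p n = p (n-1) - ρr • (μ n - ν (n-1) + r • (p (n-1) - B (φ n))) ∧
      b n = b (n-1) - ρr • (η (n-1) - μ n + r • (b (n-1) - q n)))
    (hv : ∀ n, 1 ≤ n →
      ν n = ν (n-1) + ρs • (B (φ n) - p (n-1) - s • (ν (n-1) - μ n)) ∧
      η n = η (n-1) + ρs • (b (n-1) - q n - s • (η (n-1) - μ n)))
    (hBinj : Function.Injective B) (hBrange : IsClosed (Set.range B)) :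
    UniformlyConvexOnBoundedSets G →
      (Tendsto φ atTop (nhds φs) ∧
       Tendsto p atTop (nhds (B φs)) ∧
       (UniformlyConvexOnBoundedSets F →
         Tendsto q atTop (nhds qs) ∧ Tendsto b atTop (nhds qs))) := by
  intro hGuc
  obtain ⟨hGs, hFs, hIs⟩ := isSubgradient_of_isSaddlePoint B hL hsaddle
  have hGn : ∀ n, IsSubgradient G (φ (n + 1))
      (-(ContinuousLinearMap.adjoint B) (ν n + r • (B (φ (n + 1)) - p n))) := fun n =>
    Algorithm3.isSubgradient_of_step_i B (hi (n + 1) n.succ_pos)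
  have hFn : ∀ n, IsSubgradient F (q (n + 1)) (η n + r • (b n - q (n + 1))) := fun n =>
    Algorithm3.isSubgradient_of_step_ii (hii (n + 1) n.succ_pos)
  have hIn : ∀ n, IsSubgradient I (μ (n + 1))
      (p n - b n - s • (μ (n + 1) - ν n) - s • (μ (n + 1) - η n)) := fun n =>
    Algorithm3.isSubgradient_of_step_iii (hiii (n + 1) n.succ_pos)
  obtain ⟨hG_pair, hF_pair, hφp, hqb, hp_bdd, hb_bdd⟩ :=
    Algorithm3.tendsto_of_energy_step_le (a := B φs) (c := qs) (μs := μs)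
      (x := fun n => B (φ (n + 1))) (y := fun n => q (n + 1)) (m := fun n => μ (n + 1))
      (p := p) (b := b) (ν := ν) (η := η)
      hρr hρs hstep1 hstep2 (fun n => (hiv (n + 1) n.succ_pos).1)
      (fun n => (hiv (n + 1) n.succ_pos).2) (fun n => (hv (n + 1) n.succ_pos).1)
      (fun n => (hv (n + 1) n.succ_pos).2)
      (fun n => by
        simpa only [inner_neg_adjoint_sub_neg_adjoint] using (hGn n).inner_sub_nonneg hGs)
      (fun n => (hFn n).inner_sub_nonneg hFs) (fun n => (hIn n).inner_sub_nonneg hIs)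
  obtain ⟨K, hK⟩ := B.antilipschitz_of_injective_of_isClosed_range hBinj hBrange
  have hφ : Tendsto (fun n => φ (n + 1)) atTop (𝓝 φs) :=
    hGuc.tendsto_of_inner_sub_tendsto_zero
      ((hK.isBounded_preimage (isBounded_range_of_tendsto_sub hp_bdd hφp)).subset
        (range_subset_iff.2 fun n => ⟨n, rfl⟩)) hGn hGs
      (by simpa only [inner_neg_adjoint_sub_neg_adjoint] using hG_pair)
  refine ⟨(tendsto_add_atTop_iff_nat 1).1 hφ,
    ((B.continuous.tendsto φs).comp hφ).of_tendsto_sub hφp, fun hFuc => ?_⟩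
  have hq := hFuc.tendsto_of_inner_sub_tendsto_zero (isBounded_range_of_tendsto_sub hb_bdd hqb)
    hFn hFs hF_pair
  exact ⟨(tendsto_add_atTop_iff_nat 1).1 hq, hq.of_tendsto_sub hqb⟩

/-- For Algorithm-3 iterates with B injective with closed range:
if G is uniformly convex on bounded subsets of V then φⁿ → φ* strongly and
pⁿ → Bφ* strongly, and if moreover F is uniformly convex on bounded subsets of H
then qⁿ → q* and bⁿ → q* strongly. -/
theorem algorithm3_strong_convergence
    {V H : Type*} [NormedAddCommGroup V] [InnerProductSpace ℝ V] [CompleteSpace V]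
    [NormedAddCommGroup H] [InnerProductSpace ℝ H] [CompleteSpace H]
    (B : V →L[ℝ] H) (F : H → ℝ) (G : V → ℝ) (I : H → ℝ)
    (hFconv : ConvexOn ℝ Set.univ F) (hFlsc : LowerSemicontinuous F)
    (hGconv : ConvexOn ℝ Set.univ G) (hGlsc : LowerSemicontinuous G)
    (hIconv : ConvexOn ℝ Set.univ I) (hIlsc : LowerSemicontinuous I)
    (L : V → H → H → ℝ)
    (hL : ∀ (φ' : V) (q' μ' : H), L φ' q' μ' = F q' + G φ' - I μ' + ⟪μ', B φ' - q'⟫)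
    (r s ρr ρs : ℝ) (hr : 0 < r) (hs : 0 < s) (hρr : 0 < ρr) (hρs : 0 < ρs)
    (hstep1 : 0 < 2*s - ρr - ρs*s^2 - |ρr*r - ρs*s|)
    (hstep2 : 0 < 2*r - ρr*r^2 - ρs - |ρr*r - ρs*s|)
    (φs : V) (qs μs : H) (ps bs : H) (hps : ps = B φs) (hbs : bs = qs)
    (hsaddle : ∀ (φ' : V) (q' μ' : H), L φs qs μ' ≤ L φs qs μs ∧ L φs qs μs ≤ L φ' q' μs)
    (φ : ℕ → V) (q μ p b ν η : ℕ → H)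
    (hi : ∀ n, 1 ≤ n → ∀ φ' : V,
      G φ' - G (φ n) + ⟪ν (n-1), B φ' - B (φ n)⟫
        + r * ⟪B (φ n) - p (n-1), B φ' - B (φ n)⟫ ≥ 0)
    (hii : ∀ n, 1 ≤ n → ∀ q' : H,
      F q' - F (q n) + ⟪η (n-1), q n - q'⟫ + r * ⟪b (n-1) - q n, q n - q'⟫ ≥ 0)
    (hiii : ∀ n, 1 ≤ n → ∀ μ' : H,
      I μ' - I (μ n) + ⟪μ n - μ', p (n-1) - b (n-1)⟫ - s * ⟪μ n - μ', μ n - ν (n-1)⟫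
        - s * ⟪μ n - μ', μ n - η (n-1)⟫ ≥ 0)
    (hiv : ∀ n, 1 ≤ n →
      p n = p (n-1) - ρr • (μ n - ν (n-1) + r • (p (n-1) - B (φ n))) ∧
      b n = b (n-1) - ρr • (η (n-1) - μ n + r • (b (n-1) - q n)))
    (hv : ∀ n, 1 ≤ n →
      ν n = ν (n-1) + ρs • (B (φ n) - p (n-1) - s • (ν (n-1) - μ n)) ∧
      η n = η (n-1) + ρs • (b (n-1) - q n - s • (η (n-1) - μ n)))
    (hBinj : Function.Injective B) (hBrange : IsClosed (Set.range B)) :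
    UniformlyConvexOnBoundedSets G →
      (Tendsto φ atTop (nhds φs) ∧
       Tendsto p atTop (nhds (B φs)) ∧
       (UniformlyConvexOnBoundedSets F →
         Tendsto q atTop (nhds qs) ∧ Tendsto b atTop (nhds qs))) :=
  algorithm3_strong_convergence_general B F G I L hL r s ρr ρs hρr hρs hstep1 hstep2 φs qs μs
    hsaddle φ q μ p b ν η hi hii hiii hiv hv hBinj hBrange
end

section
/- (Opial's Lemma) Let H be a real Hilbert space, U a nonempty subset of H, and (uⁿ) a sequence in H such that for every u ∈ U the real sequence (‖uⁿ − u‖) converges. If every subsequence of (uⁿ) that converges weakly has its weak limit in U, then (uⁿ) converges weakly to an element of U. -/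
/-!
Since `‖uⁿ - x‖` converges for some `x ∈ U`, the sequence is bounded, so every subsequence has a
weakly convergent subsequence (sequential Banach–Alaoglu on the separable closed span of the
sequence, plus Riesz representation), whose limit lies in `U`. For `x, y ∈ U` the identity
`‖uⁿ - x‖² - ‖uⁿ - y‖² = ‖x‖² - ‖y‖² - 2⟪uⁿ, x - y⟫` shows that `⟪uⁿ, x - y⟫` converges; if `x`
and `y` are weak limits of two subsequences, its limit is both `⟪x, x - y⟫` and `⟪y, x - y⟫`,
so `‖x - y‖² = 0`. Hence all weak subsequential limits agree, and the whole sequence converges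
weakly.
-/

open RealInnerProductSpace Filter Topology

section WeakConvergence

variable {H : Type*} [NormedAddCommGroup H] [InnerProductSpace ℝ H]

def WeaklyTendsto (u : ℕ → H) (x : H) : Prop :=
  ∀ v : H, Tendsto (fun n => ⟪u n, v⟫) atTop (𝓝 ⟪x, v⟫)

theorem exists_weaklyTendsto_subseq_of_separable [CompleteSpace H]
    [TopologicalSpace.SeparableSpace H] {u : ℕ → H} {C : ℝ} (hC : ∀ n, ‖u n‖ ≤ C) :
    ∃ x φ, StrictMono φ ∧ WeaklyTendsto (u ∘ φ) x := by
  let f : ℕ → WeakDual ℝ H := fun n => StrongDual.toWeakDual (InnerProductSpace.toDual ℝ H (u n))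
  have hf : ∀ n, f n ∈ WeakDual.toStrongDual ⁻¹' Metric.closedBall 0 C := fun n => by
    simpa [f] using hC n
  obtain ⟨g, -, φ, hφ, hlim⟩ := WeakDual.isSeqCompact_closedBall ℝ H 0 C hf
  refine ⟨(InnerProductSpace.toDual ℝ H).symm (WeakDual.toStrongDual g), φ, hφ, fun v => ?_⟩
  simpa [f, Function.comp_def, StrongDual.toWeakDual_apply] using
    ((WeakDual.eval_continuous v).tendsto g).comp hlim

theorem exists_weaklyTendsto_subseq [CompleteSpace H] {u : ℕ → H} {C : ℝ}
    (hC : ∀ n, ‖u n‖ ≤ C) : ∃ x φ, StrictMono φ ∧ WeaklyTendsto (u ∘ φ) x := by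
  let K := (Submodule.span ℝ (Set.range u)).topologicalClosure
  have hu : ∀ n, u n ∈ K := fun n =>
    Submodule.le_topologicalClosure _ (Submodule.subset_span ⟨n, rfl⟩)
  have : TopologicalSpace.SeparableSpace K :=
    (Set.countable_range u).isSeparable.span.closure.separableSpace
  obtain ⟨x, φ, hφ, hx⟩ :=
    exists_weaklyTendsto_subseq_of_separable (u := fun n => (⟨u n, hu n⟩ : K)) hC
  -- Projecting onto `K` does not change the inner products with the terms of the sequence.
  exact ⟨x, φ, hφ, fun v => by simpa using hx (K.orthogonalProjectionOnto v)⟩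

theorem WeaklyTendsto.of_forall_strictMono {u : ℕ → H} {x : H}
    (h : ∀ φ : ℕ → ℕ, StrictMono φ → ∃ ψ : ℕ → ℕ, WeaklyTendsto (u ∘ φ ∘ ψ) x) :
    WeaklyTendsto u x := fun v =>
  tendsto_of_subseq_tendsto fun ns hns => by
    obtain ⟨φ, hφ, hnsφ⟩ := strictMono_subseq_of_tendsto_atTop hns
    obtain ⟨ψ, hψ⟩ := h _ hnsφ
    exact ⟨φ ∘ ψ, hψ v⟩

theorem norm_sub_sq_sub_norm_sub_sq (u x y : H) :
    ‖u - x‖ ^ 2 - ‖u - y‖ ^ 2 = ‖x‖ ^ 2 - ‖y‖ ^ 2 - 2 * ⟪u, x - y⟫ := by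
  rw [norm_sub_sq_real, norm_sub_sq_real, inner_sub_right]
  ring

theorem tendsto_inner_sub_of_tendsto_norm_sub {u : ℕ → H} {x y : H} {a b : ℝ}
    (ha : Tendsto (fun n => ‖u n - x‖) atTop (𝓝 a))
    (hb : Tendsto (fun n => ‖u n - y‖) atTop (𝓝 b)) :
    Tendsto (fun n => ⟪u n, x - y⟫) atTop (𝓝 ((‖x‖ ^ 2 - ‖y‖ ^ 2 - (a ^ 2 - b ^ 2)) / 2)) := by
  have h := (tendsto_const_nhds (x := ‖x‖ ^ 2 - ‖y‖ ^ 2)).sub ((ha.pow 2).sub (hb.pow 2))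
  refine (h.div_const 2).congr fun n => ?_
  rw [norm_sub_sq_sub_norm_sub_sq]
  ring

theorem eq_of_weaklyTendsto_of_tendsto_inner_sub {u : ℕ → H} {x y : H} {l : ℝ}
    (h : Tendsto (fun n => ⟪u n, x - y⟫) atTop (𝓝 l)) {φ ψ : ℕ → ℕ}
    (hφ : Tendsto φ atTop atTop) (hx : WeaklyTendsto (u ∘ φ) x)
    (hψ : Tendsto ψ atTop atTop) (hy : WeaklyTendsto (u ∘ ψ) y) : x = y := by
  have hlx : ⟪x, x - y⟫ = l := tendsto_nhds_unique (hx (x - y)) (h.comp hφ)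
  have hly : ⟪y, x - y⟫ = l := tendsto_nhds_unique (hy (x - y)) (h.comp hψ)
  rw [← sub_eq_zero, ← inner_self_eq_zero (𝕜 := ℝ), inner_sub_left, hlx, hly, sub_self]

end WeakConvergence

/-- Opial's Lemma: if ‖uⁿ − u‖ converges for every u ∈ U and every
weakly convergent subsequence of (uⁿ) has its weak limit in U, then (uⁿ) converges
weakly to an element of U. -/
theorem opial_lemma
    {H : Type*} [NormedAddCommGroup H] [InnerProductSpace ℝ H] [CompleteSpace H]
    (U : Set H) (hU : U.Nonempty) (u : ℕ → H)
    (hconv : ∀ x ∈ U, ∃ l : ℝ, Tendsto (fun n => ‖u n - x‖) atTop (nhds l))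
    (hweak : ∀ k : ℕ → ℕ, StrictMono k → ∀ x : H,
      (∀ v : H, Tendsto (fun n => ⟪u (k n), v⟫) atTop (nhds ⟪x, v⟫)) → x ∈ U) :
    ∃ x ∈ U, ∀ v : H, Tendsto (fun n => ⟪u n, v⟫) atTop (nhds ⟪x, v⟫) := by
  obtain ⟨x₀, hx₀⟩ := hU
  obtain ⟨C, hC⟩ : ∃ C, ∀ n, ‖u n‖ ≤ C := by
    obtain ⟨l₀, hl₀⟩ := hconv x₀ hx₀
    obtain ⟨B, hB⟩ := hl₀.bddAbove_range
    exact ⟨B + ‖x₀‖, fun n => (norm_le_norm_sub_add (u n) x₀).trans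
      (by gcongr; exact hB ⟨n, rfl⟩)⟩
  have weak_limit_unique : ∀ {φ ψ : ℕ → ℕ} {x y : H}, StrictMono φ → WeaklyTendsto (u ∘ φ) x →
      StrictMono ψ → WeaklyTendsto (u ∘ ψ) y → x = y := by
    intro φ ψ x y hφ hx hψ hy
    obtain ⟨a, ha⟩ := hconv x (hweak φ hφ x hx)
    obtain ⟨b, hb⟩ := hconv y (hweak ψ hψ y hy)
    exact eq_of_weaklyTendsto_of_tendsto_inner_sub (tendsto_inner_sub_of_tendsto_norm_sub ha hb)
      hφ.tendsto_atTop hx hψ.tendsto_atTop hy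
  obtain ⟨x, φ, hφ, hx⟩ := exists_weaklyTendsto_subseq hC
  refine ⟨x, hweak φ hφ x hx, WeaklyTendsto.of_forall_strictMono fun ψ hψ => ?_⟩
  obtain ⟨y, σ, hσ, hy⟩ := exists_weaklyTendsto_subseq fun n => hC (ψ n)
  exact ⟨σ, weak_limit_unique hφ hx (hψ.comp hσ) hy ▸ hy⟩
end

section
/- (Property of minimizers) Let H be a real Hilbert space, U a nonempty closed convex subset of H, and F₁, F₂ : U → ℝ convex lower semicontinuous functionals, where F₁ is Gateaux differentiable on U with differential F₁' : U → H, i.e. for each u ∈ U and each v ∈ U, (F₁(u + t(v − u)) − F₁(u))/t → ⟨F₁'(u), v − u⟩ as t → 0⁺. Set F = F₁ + F₂. Then for u ∈ U the following are equivalent: (1) F(u) ≤ F(v) for all v ∈ U; (2) ⟨F₁'(u), v − u⟩ + F₂(v) − F₂(u) ≥ 0 for all v ∈ U; (3) ⟨F₁'(v), v − u⟩ + F₂(v) − F₂(u) ≥ 0 for all v ∈ U. -/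
open RealInnerProductSpace Filter Topology

/-- Property of minimizers: for F = F₁ + F₂ on a nonempty closed
convex set U, with F₁, F₂ convex lsc and F₁ Gateaux differentiable with differential
F₁', a point u ∈ U minimizes F iff the variational inequality (2) holds iff the
variational inequality (3) holds. -/
theorem minimizer_characterization
    {H : Type*} [NormedAddCommGroup H] [InnerProductSpace ℝ H] [CompleteSpace H]
    (U : Set H) (hUne : U.Nonempty) (hUclosed : IsClosed U) (hUconvex : Convex ℝ U)
    (F₁ F₂ : H → ℝ)
    (hF₁conv : ConvexOn ℝ U F₁) (hF₁lsc : LowerSemicontinuousOn F₁ U)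
    (hF₂conv : ConvexOn ℝ U F₂) (hF₂lsc : LowerSemicontinuousOn F₂ U)
    (F₁' : H → H)
    (hG : ∀ u ∈ U, ∀ v ∈ U,
      Tendsto (fun t : ℝ => (F₁ (u + t • (v - u)) - F₁ u) / t)
        (nhdsWithin 0 (Set.Ioi 0)) (nhds ⟪F₁' u, v - u⟫))
    (u : H) (hu : u ∈ U) :
    ((∀ v ∈ U, F₁ u + F₂ u ≤ F₁ v + F₂ v) ↔
      (∀ v ∈ U, ⟪F₁' u, v - u⟫ + F₂ v - F₂ u ≥ 0)) ∧
    ((∀ v ∈ U, ⟪F₁' u, v - u⟫ + F₂ v - F₂ u ≥ 0) ↔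
      (∀ v ∈ U, ⟪F₁' v, v - u⟫ + F₂ v - F₂ u ≥ 0)) := by
  -- membership of segment points
  have hmem : ∀ a ∈ U, ∀ b ∈ U, ∀ t : ℝ, 0 ≤ t → t ≤ 1 → a + t • (b - a) ∈ U := by
    intro a ha b hb t ht0 ht1
    have := hUconvex ha hb (by linarith : (0:ℝ) ≤ 1 - t) ht0 (by ring)
    have he : a + t • (b - a) = (1 - t) • a + t • b := by module
    rwa [he]
  -- convexity bound for F₁ along segments
  have hcvx : ∀ (f : H → ℝ), ConvexOn ℝ U f → ∀ a ∈ U, ∀ b ∈ U, ∀ t : ℝ, 0 ≤ t → t ≤ 1 →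
      f (a + t • (b - a)) ≤ f a + t * (f b - f a) := by
    intro f hf a ha b hb t ht0 ht1
    have := hf.2 ha hb (by linarith : (0:ℝ) ≤ 1 - t) ht0 (by ring)
    have he : a + t • (b - a) = (1 - t) • a + t • b := by module
    rw [he]
    calc f ((1-t) • a + t • b) ≤ (1-t) * f a + t * f b := this
      _ = f a + t * (f b - f a) := by ring
  have hIoc : Set.Ioc (0:ℝ) 1 ∈ 𝓝[>] (0:ℝ) :=
    Ioc_mem_nhdsGT_of_mem (by constructor <;> norm_num)
  -- gradient inequality
  have hgrad : ∀ a ∈ U, ∀ b ∈ U, ⟪F₁' a, b - a⟫ ≤ F₁ b - F₁ a := by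
    intro a ha b hb
    refine le_of_tendsto (hG a ha b hb) ?_
    filter_upwards [hIoc] with t ht
    rw [div_le_iff₀ ht.1]
    have := hcvx F₁ hF₁conv a ha b hb t ht.1.le ht.2
    linarith
  -- (1) → (2)
  have h12 : (∀ v ∈ U, F₁ u + F₂ u ≤ F₁ v + F₂ v) →
      (∀ v ∈ U, ⟪F₁' u, v - u⟫ + F₂ v - F₂ u ≥ 0) := by
    intro hmin v hv
    have hge : F₂ u - F₂ v ≤ ⟪F₁' u, v - u⟫ := by
      refine ge_of_tendsto (hG u hu v hv) ?_
      filter_upwards [hIoc] with t ht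
      rw [le_div_iff₀ ht.1]
      have h1 := hmin _ (hmem u hu v hv t ht.1.le ht.2)
      have h2 := hcvx F₂ hF₂conv u hu v hv t ht.1.le ht.2
      nlinarith
    linarith
  -- (2) → (1)
  have h21 : (∀ v ∈ U, ⟪F₁' u, v - u⟫ + F₂ v - F₂ u ≥ 0) →
      (∀ v ∈ U, F₁ u + F₂ u ≤ F₁ v + F₂ v) := by
    intro hvi v hv
    have h1 := hgrad u hu v hv
    have h2 := hvi v hv
    linarith
  -- (2) → (3) via monotonicity
  have h23 : (∀ v ∈ U, ⟪F₁' u, v - u⟫ + F₂ v - F₂ u ≥ 0) →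
      (∀ v ∈ U, ⟪F₁' v, v - u⟫ + F₂ v - F₂ u ≥ 0) := by
    intro hvi v hv
    have h1 := hgrad u hu v hv
    have h2 := hgrad v hv u hu
    have he : ⟪F₁' v, u - v⟫ = -⟪F₁' v, v - u⟫ := by
      rw [show u - v = -(v - u) by abel, inner_neg_right]
    rw [he] at h2
    have h3 := hvi v hv
    linarith
  -- (3) → (1)
  have h31 : (∀ v ∈ U, ⟪F₁' v, v - u⟫ + F₂ v - F₂ u ≥ 0) →
      (∀ v ∈ U, F₁ u + F₂ u ≤ F₁ v + F₂ v) := by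
    intro hvi v hv
    set L : ℝ := F₁ v + (F₂ v - F₂ u) with hLdef
    suffices hL : F₁ u ≤ L by simp only [hLdef] at hL; linarith
    by_contra hcon
    push_neg at hcon
    set c : ℝ := (L + F₁ u) / 2 with hcdef
    have hcF : c < F₁ u := by simp only [hcdef]; linarith
    have hLc : L < c := by simp only [hcdef]; linarith
    -- the path tends to u within U
    have hw : Tendsto (fun t : ℝ => u + t • (v - u)) (𝓝[>] 0) (𝓝[U] u) := by
      rw [tendsto_nhdsWithin_iff]
      constructor
      · have : Continuous (fun t : ℝ => u + t • (v - u)) := by continuity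
        have h0 : (fun t : ℝ => u + t • (v - u)) 0 = u := by simp
        exact (this.tendsto' 0 u h0).mono_left nhdsWithin_le_nhds
      · filter_upwards [hIoc] with t ht
        exact hmem u hu v hv t ht.1.le ht.2
    have hlsc := hF₁lsc u hu c hcF
    have hev : ∀ᶠ t in 𝓝[>] (0:ℝ), c < F₁ (u + t • (v - u)) := hw.eventually hlsc
    -- eventual upper bound on F₁ along the path
    have hub : ∀ᶠ t in 𝓝[>] (0:ℝ),
        F₁ (u + t • (v - u)) ≤ F₁ v + (1 - t) * (F₂ v - F₂ u) := by
      filter_upwards [hIoc] with t ht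
      set w := u + t • (v - u) with hwdef
      have hwU : w ∈ U := hmem u hu v hv t ht.1.le ht.2
      have h3 := hvi w hwU
      have hinner : ⟪F₁' w, w - u⟫ = t * ⟪F₁' w, v - u⟫ := by
        rw [show w - u = t • (v - u) by simp [hwdef], real_inner_smul_right]
      rw [hinner] at h3
      have h2 := hcvx F₂ hF₂conv u hu v hv t ht.1.le ht.2
      have h4 := hgrad w hwU v hv
      have hvw : ⟪F₁' w, v - w⟫ = (1 - t) * ⟪F₁' w, v - u⟫ := by
        rw [show v - w = (1 - t) • (v - u) by simp [hwdef]; module, real_inner_smul_right]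
      rw [hvw] at h4
      set X : ℝ := ⟪F₁' w, v - u⟫ with hXdef
      set D : ℝ := F₂ v - F₂ u with hDdef
      clear hG hvi hev hlsc hw hgrad hcvx hmem hF₁lsc hF₂lsc hF₁conv hF₂conv hIoc
      have hXD : (0:ℝ) ≤ t * (X + D) := by linarith [mul_add t X D]
      have hXD' : (0:ℝ) ≤ X + D := by
        have := le_of_mul_le_mul_left (by linarith : t * 0 ≤ t * (X + D)) ht.1
        linarith
      have hprod : (0:ℝ) ≤ (1 - t) * (X + D) := mul_nonneg (by linarith [ht.2]) hXD'
      linarith [mul_add (1 - t) X D]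
    -- combine: c ≤ L
    have hgL : Tendsto (fun t : ℝ => F₁ v + (1 - t) * (F₂ v - F₂ u)) (𝓝[>] (0:ℝ)) (𝓝 L) := by
      have : Continuous (fun t : ℝ => F₁ v + (1 - t) * (F₂ v - F₂ u)) :=
        continuous_const.add ((continuous_const.sub continuous_id).mul continuous_const)
      have h0 : (fun t : ℝ => F₁ v + (1 - t) * (F₂ v - F₂ u)) 0 = L := by simp [hLdef]
      exact (this.tendsto' 0 L h0).mono_left nhdsWithin_le_nhds
    have hcL : c ≤ L := by
      refine ge_of_tendsto hgL ?_
      filter_upwards [hev, hub] with t h1 h2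
      linarith
    linarith
  exact ⟨⟨h12, h21⟩, ⟨h23, fun h3 => h12 (h31 h3)⟩⟩
end
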